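/- arXiv:2505.13689 — 6 statements merged into one kernel-verified Lean document; each statement's English description precedes it below -/
import Mathlib

section
/- Let F be a lift of an orientation-preserving circle homeomorphism that is piecewise linear (affine on finitely many intervals determined by break points). If F^q(x) = x + p for all real x (i.e., every point is periodic of period q for the circle map with rotation number p/q), then the circle map is conjugate to the rigid rotation x ↦ x + p/q (mod 1) via a piecewise linear circle homeomorphism. -/
/-!
The conjugacy is the Birkhoff average `H = (1/q) ∑_{j<q} F^j`. It is again a lift, and
`F^q = id + p` gives `H ∘ F = H + p/q`. Near any point whose first `q` iterates avoid the
break points of `F` (mod 1), every `F^j` and hence `H` is affine. The remaining points form a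
discrete set, and at each of them `H` is affine on both sides, so it either has a genuine break
point there or is affine nearby. Hence `H` is piecewise linear, with break points among the
finitely many exceptional points of `[0, 1)`.
-/

open MeasureTheory Filter Set

/-- A lift of an orientation-preserving circle homeomorphism. -/
def IsLift (F : ℝ → ℝ) : Prop :=
  Continuous F ∧ StrictMono F ∧ ∀ x, F (x + 1) = F x + 1

/-- `b` is a break point of `F`: one-sided derivatives exist and differ. -/
def IsBreakPoint (F : ℝ → ℝ) (b : ℝ) : Prop :=
  ∃ dm dp : ℝ, dm ≠ dp ∧ HasDerivWithinAt F dm (Set.Iic b) b ∧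
    HasDerivWithinAt F dp (Set.Ici b) b

/-- `F` is a piecewise linear lift with break point set `B ⊆ [0,1)`:
it is a lift, each point of `B` is a break point, and `F` is affine near any
point not congruent (mod 1) to a break point. -/
def IsPWLLift (F : ℝ → ℝ) (B : Finset ℝ) : Prop :=
  IsLift F ∧ (↑B : Set ℝ) ⊆ Set.Ico (0 : ℝ) 1 ∧
  (∀ b ∈ B, IsBreakPoint F b) ∧
  (∀ x : ℝ, (∀ b ∈ B, ∀ k : ℤ, x ≠ b + k) →
    ∃ ε > 0, ∃ a c : ℝ, ∀ y, |y - x| < ε → F y = a * y + c)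

/-- The rotation number of the lift `F` is `ρ`. -/
def HasRotNum (F : ℝ → ℝ) (ρ : ℝ) : Prop :=
  ∀ x : ℝ, Filter.Tendsto (fun m : ℕ => (F^[m] x - x) / m) Filter.atTop (nhds ρ)

/-- `b` and `b'` lie on the same orbit of the circle map induced by the lift `F`. -/
def SameOrbit (F : ℝ → ℝ) (b b' : ℝ) : Prop :=
  ∃ j : ℕ, ∃ m : ℤ, F^[j] b = b' + m ∨ F^[j] b' = b + m

open Topology

lemma map_add_intCast_of_map_add_one {f : ℝ → ℝ} (h : ∀ x, f (x + 1) = f x + 1) (m : ℤ)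
    (x : ℝ) : f (x + m) = f x + m := by
  have hper : Function.Periodic (fun y => f y - y) 1 := fun y => by simp only [h]; ring
  have := hper.int_mul m x
  simp only [mul_one] at this
  linarith

namespace IsLift

variable {F : ℝ → ℝ}

lemma iterate (hF : IsLift F) (n : ℕ) : IsLift F^[n] :=
  ⟨hF.1.iterate n, hF.2.1.iterate n, Function.Commute.iterate_left hF.2.2 n⟩

lemma birkhoffAverage (hF : IsLift F) {n : ℕ} (hn : 0 < n) :
    IsLift (birkhoffAverage ℝ F id n) := by
  have hn' : (0 : ℝ) < n := Nat.cast_pos.2 hn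
  refine ⟨?_, ?_, fun x => ?_⟩
  · exact (continuous_finsetSum _ fun j _ => (hF.iterate j).1).const_smul (n : ℝ)⁻¹
  · intro x y hxy
    refine smul_lt_smul_of_pos_left ?_ (inv_pos.2 hn')
    exact Finset.sum_lt_sum_of_nonempty (Finset.nonempty_range_iff.2 hn.ne')
      fun j _ => (hF.iterate j).2.1 hxy
  · have hsum : birkhoffSum F id n (x + 1) = birkhoffSum F id n x + n := by
      simp [birkhoffSum, (hF.iterate _).2.2, Finset.sum_add_distrib]
    simp only [_root_.birkhoffAverage, hsum, smul_eq_mul]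
    field_simp

end IsLift

lemma hasDerivAt_affine (a c x : ℝ) : HasDerivAt (fun y => a * y + c) a x := by
  simpa using ((hasDerivAt_id x).const_mul a).add_const c

def IsLocallyAffineAt (f : ℝ → ℝ) (x : ℝ) : Prop :=
  ∃ a c : ℝ, f =ᶠ[𝓝 x] fun y => a * y + c

lemma isLocallyAffineAt_iff {f : ℝ → ℝ} {x : ℝ} : IsLocallyAffineAt f x ↔
    ∃ ε > 0, ∃ a c : ℝ, ∀ y, |y - x| < ε → f y = a * y + c := by
  simp only [IsLocallyAffineAt, EventuallyEq, Metric.eventually_nhds_iff, Real.dist_eq]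
  exact ⟨fun ⟨a, c, ε, hε, h⟩ => ⟨ε, hε, a, c, fun y hy => h hy⟩,
    fun ⟨ε, hε, a, c, h⟩ => ⟨a, c, ε, hε, fun y hy => h y hy⟩⟩

namespace IsLocallyAffineAt

variable {f g : ℝ → ℝ} {x : ℝ}

lemma eventually_hasDerivAt (h : IsLocallyAffineAt f x) :
    ∃ a, ∀ᶠ y in 𝓝 x, HasDerivAt f a y := by
  obtain ⟨a, c, h⟩ := h
  exact ⟨a, h.eventuallyEq_nhds.mono fun y hy => hy.hasDerivAt_iff.2 (hasDerivAt_affine a c y)⟩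

lemma continuousAt (h : IsLocallyAffineAt f x) : ContinuousAt f x :=
  let ⟨_, h⟩ := h.eventually_hasDerivAt
  h.self_of_nhds.continuousAt

lemma comp (hf : IsLocallyAffineAt f (g x)) (hg : IsLocallyAffineAt g x) :
    IsLocallyAffineAt (f ∘ g) x := by
  have hgc := hg.continuousAt
  obtain ⟨a, c, hf⟩ := hf
  obtain ⟨a', c', hg⟩ := hg
  refine ⟨a * a', a * c' + c, ?_⟩
  filter_upwards [hf.comp_tendsto hgc, hg] with y hfy hgy
  simp only [Function.comp_apply] at hfy ⊢
  rw [hfy, hgy]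
  ring

lemma add (hf : IsLocallyAffineAt f x) (hg : IsLocallyAffineAt g x) :
    IsLocallyAffineAt (f + g) x := by
  obtain ⟨a, c, hf⟩ := hf
  obtain ⟨a', c', hg⟩ := hg
  refine ⟨a + a', c + c', ?_⟩
  filter_upwards [hf, hg] with y hfy hgy
  simp only [Pi.add_apply, hfy, hgy]
  ring

lemma const_smul (hf : IsLocallyAffineAt f x) (r : ℝ) : IsLocallyAffineAt (r • f) x := by
  obtain ⟨a, c, hf⟩ := hf
  refine ⟨r * a, r * c, ?_⟩
  filter_upwards [hf] with y hfy
  simp only [Pi.smul_apply, smul_eq_mul, hfy]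
  ring

lemma iterate {n : ℕ} (h : ∀ j < n, IsLocallyAffineAt f (f^[j] x)) :
    IsLocallyAffineAt f^[n] x := by
  induction n with
  | zero => exact ⟨1, 0, Eventually.of_forall fun y => by simp⟩
  | succ n ih =>
    rw [Function.iterate_succ']
    exact (h n n.lt_succ_self).comp (ih fun j hj => h j (Nat.lt_succ_of_lt hj))

lemma birkhoffAverage {n : ℕ} (h : ∀ j < n, IsLocallyAffineAt f (f^[j] x)) :
    IsLocallyAffineAt (birkhoffAverage ℝ f id n) x := by
  have hsum : IsLocallyAffineAt (∑ j ∈ Finset.range n, f^[j]) x := by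
    refine Finset.sum_induction _ (IsLocallyAffineAt · x) (fun _ _ => add)
      ⟨0, 0, Eventually.of_forall fun y => by simp⟩
      fun j hj => iterate fun i hi => h i (hi.trans (Finset.mem_range.1 hj))
  convert hsum.const_smul (n : ℝ)⁻¹ using 1
  ext y
  simp [_root_.birkhoffAverage, birkhoffSum]

lemma shift {t : ℝ} (hf : ∀ y, f (y + t) = f y + t) (h : IsLocallyAffineAt f x) :
    IsLocallyAffineAt f (x + t) := by
  obtain ⟨a, c, h⟩ := h
  have hsub : Tendsto (fun y => y - t) (𝓝 (x + t)) (𝓝 x) := by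
    simpa using (continuous_sub_right t).tendsto (x + t)
  refine ⟨a, c + t - a * t, ?_⟩
  filter_upwards [h.comp_tendsto hsub] with y hy
  have := hf (y - t)
  simp only [sub_add_cancel, Function.comp_apply] at this hy
  rw [this, hy]
  ring

lemma not_isBreakPoint (h : IsLocallyAffineAt f x) : ¬ IsBreakPoint f x := by
  rintro ⟨dm, dp, hne, hdm, hdp⟩
  obtain ⟨a, ha⟩ := h.eventually_hasDerivAt
  have hx := ha.self_of_nhds
  exact hne (((uniqueDiffWithinAt_Iic x).eq_deriv _ hdm hx.hasDerivWithinAt).trans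
    ((uniqueDiffWithinAt_Ici x).eq_deriv _ hdp hx.hasDerivWithinAt).symm)

end IsLocallyAffineAt

lemma exists_eqOn_Icc_of_isLocallyAffineAt {f : ℝ → ℝ} {u v : ℝ} (huv : u < v)
    (hf : ContinuousOn f (Icc u v)) (h : ∀ y ∈ Ioo u v, IsLocallyAffineAt f y) :
    ∃ a c : ℝ, EqOn f (fun y => a * y + c) (Icc u v) := by
  have hderiv : ∀ y ∈ Ioo u v, HasDerivAt f (deriv f y) y ∧
      HasDerivAt (deriv f) 0 y := by
    intro y hy
    obtain ⟨a, ha⟩ := (h y hy).eventually_hasDerivAt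
    have hconst : deriv f =ᶠ[𝓝 y] fun _ => a := ha.mono fun z hz => hz.deriv
    exact ⟨ha.self_of_nhds.differentiableAt.hasDerivAt,
      (hasDerivAt_const y a).congr_of_eventuallyEq hconst⟩
  -- `deriv f` is locally constant on `Ioo u v`, hence constant on this connected set.
  obtain ⟨a, ha⟩ := isOpen_Ioo.exists_is_const_of_deriv_eq_zero isPreconnected_Ioo
    (fun y hy => (hderiv y hy).2.differentiableAt.differentiableWithinAt)
    (fun y hy => (hderiv y hy).2.deriv)
  obtain ⟨c, hc⟩ := isOpen_Ioo.exists_eq_add_of_deriv_eq (g := fun y => a * y)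
    isPreconnected_Ioo
    (fun y hy => (hderiv y hy).1.differentiableAt.differentiableWithinAt)
    (by fun_prop) (fun y hy => by simp [ha y hy])
  exact ⟨a, c, hc.of_subset_closure hf (by fun_prop) Ioo_subset_Icc_self
    (closure_Ioo huv.ne).symm.subset⟩

lemma isBreakPoint_or_isLocallyAffineAt {f : ℝ → ℝ} {x : ℝ} (hf : ContinuousAt f x)
    (h : ∀ᶠ y in 𝓝[≠] x, IsLocallyAffineAt f y) :
    IsBreakPoint f x ∨ IsLocallyAffineAt f x := by
  obtain ⟨ε, hε, hball⟩ := Metric.eventually_nhds_iff.1 (eventually_nhdsWithin_iff.1 h)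
  obtain ⟨δ, hδ, hδε⟩ : ∃ δ, 0 < δ ∧ δ < ε := ⟨ε / 2, by positivity, by linarith⟩
  have hloc : ∀ y ∈ Icc (x - δ) (x + δ), y ≠ x → IsLocallyAffineAt f y := fun y hy hne =>
    hball (by rw [Real.dist_eq, abs_lt]; constructor <;> linarith [hy.1, hy.2]) hne
  have hcont : ContinuousOn f (Icc (x - δ) (x + δ)) := fun y hy => by
    rcases eq_or_ne y x with rfl | hne
    · exact hf.continuousWithinAt
    · exact (hloc y hy hne).continuousAt.continuousWithinAt
  obtain ⟨am, cm, hm⟩ := exists_eqOn_Icc_of_isLocallyAffineAt (by linarith : x - δ < x)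
    (hcont.mono (Icc_subset_Icc_right (by linarith)))
    fun y hy => hloc y ⟨hy.1.le, by linarith [hy.2]⟩ hy.2.ne
  obtain ⟨ap, cp, hp⟩ := exists_eqOn_Icc_of_isLocallyAffineAt (by linarith : x < x + δ)
    (hcont.mono (Icc_subset_Icc_left (by linarith)))
    fun y hy => hloc y ⟨by linarith [hy.1], hy.2.le⟩ hy.1.ne'
  have hxm : x ∈ Icc (x - δ) x := ⟨by linarith, le_rfl⟩
  have hxp : x ∈ Icc x (x + δ) := ⟨le_rfl, by linarith⟩
  by_cases hslope : am = ap
  · right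
    have hcm : cm = cp := by
      have := (hm hxm).symm.trans (hp hxp)
      rw [hslope] at this
      linarith
    refine ⟨ap, cp, eventually_of_mem (Icc_mem_nhds (by linarith : x - δ < x)
      (by linarith : x < x + δ)) fun y hy => ?_⟩
    rcases le_total y x with hyx | hxy
    · rw [hm ⟨hy.1, hyx⟩, hslope, hcm]
    · exact hp ⟨hxy, hy.2⟩
  · exact Or.inl ⟨am, ap, hslope,
      ((hasDerivAt_affine am cm x).hasDerivWithinAt.congr_of_mem hm hxm).mono_of_mem_nhdsWithin
        (Icc_mem_nhdsLE (by linarith)),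
      ((hasDerivAt_affine ap cp x).hasDerivWithinAt.congr_of_mem hp hxp).mono_of_mem_nhdsWithin
        (Icc_mem_nhdsGE (by linarith))⟩

lemma eventually_nhdsNE_forall_ne_intCast (z : ℝ) : ∀ᶠ w in 𝓝[≠] z, ∀ k : ℤ, w ≠ (k : ℝ) := by
  have hclosed : IsClosed ((Int.cast : ℤ → ℝ) '' {k | (k : ℝ) ≠ z}) :=
    Int.isClosedEmbedding_coe_real.isClosedMap _ (isClosed_discrete _)
  filter_upwards [nhdsWithin_le_nhds (hclosed.isOpen_compl.mem_nhds (by simp)),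
    self_mem_nhdsWithin] with w hw hwz k hk
  exact hw ⟨k, show (k : ℝ) ≠ z from hk ▸ hwz, hk.symm⟩

lemma IsLift.eventually_nhdsNE_iterate_ne_add_intCast {F : ℝ → ℝ} (hF : IsLift F)
    (B : Finset ℝ) (n : ℕ) (x : ℝ) :
    ∀ᶠ y in 𝓝[≠] x, ∀ j < n, ∀ b ∈ B, ∀ k : ℤ, F^[j] y ≠ b + k := by
  suffices ∀ j b, ∀ᶠ y in 𝓝[≠] x, ∀ k : ℤ, F^[j] y - b ≠ k by
    have hall := (eventually_all_finite (finite_Iio n)).2 fun j _ =>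
      (eventually_all_finset B).2 fun b _ => this j b
    filter_upwards [hall] with y hy j hj b hb k
    exact fun h => hy j hj b hb k (by rw [h]; ring)
  intro j b
  have hinj : ∀ y ≠ x, F^[j] y - b ≠ F^[j] x - b := fun y hy h =>
    hy ((hF.iterate j).2.1.injective (sub_left_inj.1 h))
  have hcont : Continuous fun y => F^[j] y - b := (hF.iterate j).1.sub continuous_const
  exact (tendsto_nhdsWithin_of_tendsto_nhds_of_eventually_within _
    ((hcont.tendsto x).mono_left nhdsWithin_le_nhds)
    (eventually_nhdsWithin_of_forall hinj)).eventually (eventually_nhdsNE_forall_ne_intCast _)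

theorem IsPWLLift.exists_isPWLLift_birkhoffAverage {F : ℝ → ℝ} {B : Finset ℝ}
    (hF : IsPWLLift F B) {n : ℕ} (hn : 0 < n) :
    ∃ B' : Finset ℝ, IsPWLLift (birkhoffAverage ℝ F id n) B' := by
  obtain ⟨hlift, -, -, hFaff⟩ := hF
  set H := birkhoffAverage ℝ F id n
  have hH : IsLift H := hlift.birkhoffAverage hn
  have hloc : ∀ x, ∀ᶠ y in 𝓝[≠] x, IsLocallyAffineAt H y := fun x =>
    (hlift.eventually_nhdsNE_iterate_ne_add_intCast B n x).mono fun y hy =>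
      IsLocallyAffineAt.birkhoffAverage fun j hj => isLocallyAffineAt_iff.2 (hFaff _ (hy j hj))
  have hfin : {x ∈ Ico (0 : ℝ) 1 | IsBreakPoint H x}.Finite := by
    refine (isCompact_Icc.finite_sdiff_of_mem_codiscreteWithin
      (mem_codiscreteWithin_iff_forall_mem_nhdsNE.2 fun x _ =>
        mem_of_superset (hloc x) subset_union_left)).subset fun x hx =>
      ⟨Ico_subset_Icc_self hx.1, fun haff => IsLocallyAffineAt.not_isBreakPoint haff hx.2⟩
  refine ⟨hfin.toFinset, hH, fun x hx => (hfin.mem_toFinset.1 hx).1,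
    fun b hb => (hfin.mem_toFinset.1 hb).2, fun x hx => ?_⟩
  rw [← isLocallyAffineAt_iff, ← Int.fract_add_floor x]
  rcases isBreakPoint_or_isLocallyAffineAt hH.1.continuousAt (hloc (Int.fract x)) with
    hbrk | haff
  · exact absurd (Int.fract_add_floor x).symm <| hx _ (hfin.mem_toFinset.2
      ⟨⟨Int.fract_nonneg x, Int.fract_lt_one x⟩, hbrk⟩) ⌊x⌋
  · exact haff.shift (map_add_intCast_of_map_add_one hH.2.2 ⌊x⌋)

/-- A PWL lift with `F^q(x) = x + p` for all `x` is conjugate to the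
rigid rotation by `p/q` via a piecewise linear circle homeomorphism. -/
theorem stmt0 (F : ℝ → ℝ) (B : Finset ℝ) (p : ℤ) (q : ℕ) (hq : 0 < q)
    (hF : IsPWLLift F B) (hper : ∀ x, F^[q] x = x + p) :
    ∃ (H : ℝ → ℝ) (B' : Finset ℝ), IsPWLLift H B' ∧
      ∀ x, H (F x) = H x + (p : ℝ) / q := by
  obtain ⟨B', hB'⟩ := hF.exists_isPWLLift_birkhoffAverage hq
  refine ⟨birkhoffAverage ℝ F id q, B', hB', fun x => ?_⟩
  have := birkhoffAverage_apply_sub_birkhoffAverage (R := ℝ) F id q x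
  rw [id, id, hper, smul_eq_mul] at this
  rw [div_eq_inv_mul]
  linarith
end

section
/- Let f be a piecewise linear orientation-preserving circle homeomorphism with rotation number p/q that is topologically conjugate to the rigid rotation by p/q. Then the orbit under f of every break point contains at least one other break point. In particular, if f has n break points, the number of distinct periodic orbits containing break points is at most n/2. -/
open MeasureTheory Filter Set

/-!
Conjugacy to the rotation by `p/q` forces `F^[q] = (· + p)`, whose left and right derivatives
are both `1` everywhere. If a break point `b`, with one-sided slopes `dm ≠ dp`, had no other
break point on its orbit, the one-sided chain rule along the orbit would give `F^[q]` the left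
and right derivatives `dm ^ k * c` and `dp ^ k * c` at `b`, where `k ≥ 1` counts the returns of
the orbit to `b + ℤ` and `c` is the product of the slopes of `F` at the other orbit points.
As `dm, dp ≥ 0`, this forces `dm = dp`. Once `F^[q] = (· + p)`, lying on a common orbit is an
equivalence relation, and its classes in `B` have at least two elements each.
-/

open Function

def HasOneSidedDerivAt (g : ℝ → ℝ) (l r x : ℝ) : Prop :=
  HasDerivWithinAt g l (Iic x) x ∧ HasDerivWithinAt g r (Ici x) x

section OneSidedDeriv

variable {f g : ℝ → ℝ} {a l r l' r' x : ℝ}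

theorem HasDerivAt.hasOneSidedDerivAt (h : HasDerivAt g a x) : HasOneSidedDerivAt g a a x :=
  ⟨h.hasDerivWithinAt, h.hasDerivWithinAt⟩

theorem HasOneSidedDerivAt.comp_of_monotone (hf : HasOneSidedDerivAt f l' r' (g x))
    (hg : HasOneSidedDerivAt g l r x) (hmono : Monotone g) :
    HasOneSidedDerivAt (f ∘ g) (l' * l) (r' * r) x :=
  ⟨hf.1.comp x hg.1 fun _ hy => hmono hy, hf.2.comp x hg.2 fun _ hy => hmono hy⟩

theorem HasOneSidedDerivAt.unique (h : HasOneSidedDerivAt g l r x)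
    (h' : HasOneSidedDerivAt g l' r' x) : l = l' ∧ r = r' :=
  ⟨(uniqueDiffWithinAt_Iic x).eq_deriv _ h.1 h'.1,
    (uniqueDiffWithinAt_Ici x).eq_deriv _ h.2 h'.2⟩

theorem HasOneSidedDerivAt.nonneg_of_monotone (h : HasOneSidedDerivAt g l r x)
    (hmono : Monotone g) : 0 ≤ l ∧ 0 ≤ r :=
  ⟨h.1.derivWithin (uniqueDiffWithinAt_Iic x) ▸ (hmono.monotoneOn _).derivWithin_nonneg,
    h.2.derivWithin (uniqueDiffWithinAt_Ici x) ▸ (hmono.monotoneOn _).derivWithin_nonneg⟩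

theorem HasDerivWithinAt.preimage_sub_of_map_add {s : Set ℝ} {c : ℝ}
    (hc : ∀ y, g (y + c) = g y + c) (h : HasDerivWithinAt g a s x) :
    HasDerivWithinAt g a ((· - c) ⁻¹' s) (x + c) := by
  have hshift : HasDerivWithinAt (fun y => g (y - c) + c) (a * 1) ((· - c) ⁻¹' s) (x + c) :=
    (h.comp_of_eq (x + c) ((hasDerivWithinAt_id _ _).sub_const c) (mapsTo_preimage _ _)
      (add_sub_cancel_right x c).symm).add_const c
  rw [mul_one] at hshift
  refine hshift.congr (fun y _ => ?_) ?_ <;> simp [← hc]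

theorem HasOneSidedDerivAt.add_of_map_add {c : ℝ} (hc : ∀ y, g (y + c) = g y + c)
    (h : HasOneSidedDerivAt g l r x) : HasOneSidedDerivAt g l r (x + c) := by
  simpa only [HasOneSidedDerivAt, preimage_sub_const_Iic, preimage_sub_const_Ici] using
    And.intro (h.1.preimage_sub_of_map_add hc) (h.2.preimage_sub_of_map_add hc)

end OneSidedDeriv

namespace IsLift

variable {F : ℝ → ℝ}

theorem map_add_int (hF : IsLift F) (x : ℝ) (m : ℤ) : F (x + m) = F x + m :=
  AddConstMapClass.map_add_int (⟨F, hF.2.2⟩ : AddConstMap ℝ ℝ 1 1) x m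

theorem iterate_map_add_int (hF : IsLift F) (n : ℕ) (x : ℝ) (m : ℤ) :
    F^[n] (x + m) = F^[n] x + m :=
  Commute.iterate_left (fun y => hF.map_add_int y m) n x

theorem iterate_eq_add_of_semiconj {H : ℝ → ℝ} {p : ℤ} {q : ℕ} (hq : 0 < q) (hH : IsLift H)
    (hconj : ∀ x, H (F x) = H x + (p : ℝ) / q) : F^[q] = (· + (p : ℝ)) := by
  funext x
  apply hH.2.1.injective
  have hsemi : Semiconj H F (· + (p : ℝ) / q) := hconj
  rw [hsemi.iterate_right q x, add_right_iterate, hH.map_add_int, nsmul_eq_mul,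
    mul_div_cancel₀ _ (Nat.cast_ne_zero.2 hq.ne')]

end IsLift

section Periodic

variable {F : ℝ → ℝ} {p : ℤ} {q : ℕ}

theorem iterate_mul_eq_add (hFq : F^[q] = (· + (p : ℝ))) (j : ℕ) (x : ℝ) :
    F^[q * j] x = x + j * p := by
  rw [iterate_mul, hFq, add_right_iterate, nsmul_eq_mul]

theorem sameOrbit_iff_of_iterate_eq_add (hF : IsLift F) (hq : 0 < q)
    (hFq : F^[q] = (· + (p : ℝ))) {b b' : ℝ} :
    SameOrbit F b b' ↔ ∃ j : ℕ, ∃ m : ℤ, F^[j] b = b' + m := by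
  refine ⟨fun ⟨j, m, h⟩ => h.elim (fun h => ⟨j, m, h⟩) fun h => ?_,
    fun ⟨j, m, h⟩ => ⟨j, m, .inl h⟩⟩
  -- going once more around the period brings `F^[j] b'` back to `b'` up to an integer
  refine ⟨(q - 1) * j, j * p - m, ?_⟩
  have hb : b = F^[j] b' + ((-m : ℤ) : ℝ) := by push_cast; linarith
  rw [hb, hF.iterate_map_add_int, ← iterate_add_apply, ← Nat.succ_mul, Nat.succ_eq_add_one,
    Nat.sub_add_cancel hq, iterate_mul_eq_add hFq]
  push_cast
  ring

theorem equivalence_sameOrbit (hF : IsLift F) (hq : 0 < q) (hFq : F^[q] = (· + (p : ℝ))) :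
    Equivalence (SameOrbit F) where
  refl _ := ⟨0, 0, .inl (by simp)⟩
  symm := fun ⟨j, m, h⟩ => ⟨j, m, h.symm⟩
  trans {b b₁ b₂} h₁ h₂ := by
    rw [sameOrbit_iff_of_iterate_eq_add hF hq hFq] at h₁ h₂ ⊢
    obtain ⟨j₁, m₁, h₁⟩ := h₁
    obtain ⟨j₂, m₂, h₂⟩ := h₂
    refine ⟨j₂ + j₁, m₂ + m₁, ?_⟩
    rw [iterate_add_apply, h₁, hF.iterate_map_add_int, h₂]
    push_cast
    ring

end Periodic

namespace IsPWLLift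

variable {F : ℝ → ℝ} {B : Finset ℝ}

theorem exists_hasDerivAt (hF : IsPWLLift F B) {x : ℝ} (hx : ∀ b ∈ B, ∀ k : ℤ, x ≠ b + k) :
    ∃ a, HasDerivAt F a x := by
  obtain ⟨ε, hε, a, c, haff⟩ := hF.2.2.2 x hx
  have hline : HasDerivAt (fun y => a * y + c) a x := by
    simpa using ((hasDerivAt_id x).const_mul a).add_const c
  refine ⟨a, hline.congr_of_eventuallyEq ?_⟩
  exact Metric.eventually_nhds_iff.2 ⟨ε, hε, fun y hy => haff y (Real.dist_eq y x ▸ hy)⟩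

theorem exists_hasOneSidedDerivAt_iterate (hF : IsPWLLift F B) {b dm dp : ℝ}
    (hlonely : ∀ b' ∈ B, SameOrbit F b b' → b' = b) (hd : HasOneSidedDerivAt F dm dp b)
    (n : ℕ) : ∃ k c, (0 < n → 0 < k) ∧ HasOneSidedDerivAt F^[n] (dm ^ k * c) (dp ^ k * c) b := by
  induction n with
  | zero => exact ⟨0, 1, by simp, by simpa using (hasDerivAt_id b).hasOneSidedDerivAt⟩
  | succ n ih =>
    obtain ⟨k, c, hk, hn⟩ := ih
    have hmono : Monotone F^[n] := (hF.1.2.1.iterate n).monotone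
    rw [iterate_succ']
    by_cases hbreak : ∃ m : ℤ, F^[n] b = b + m
    · obtain ⟨m, hm⟩ := hbreak
      have hdm : HasOneSidedDerivAt F dm dp (F^[n] b) :=
        hm ▸ hd.add_of_map_add fun y => hF.1.map_add_int y m
      exact ⟨k + 1, c, fun _ => k.succ_pos, by
        simpa only [pow_succ', mul_assoc] using hdm.comp_of_monotone hn hmono⟩
    · push Not at hbreak
      have hregular : ∀ b' ∈ B, ∀ m : ℤ, F^[n] b ≠ b' + m := fun b' hb' m h =>
        hbreak m (hlonely b' hb' ⟨n, m, .inl h⟩ ▸ h)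
      obtain ⟨a, ha⟩ := hF.exists_hasDerivAt hregular
      have hn0 : 0 < n := Nat.pos_of_ne_zero fun h => hbreak 0 (by simp [h])
      exact ⟨k, a * c, fun _ => hk hn0, by
        simpa only [mul_left_comm] using ha.hasOneSidedDerivAt.comp_of_monotone hn hmono⟩

theorem exists_ne_sameOrbit (hF : IsPWLLift F B) {p : ℤ} {q : ℕ} (hq : 0 < q)
    (hFq : F^[q] = (· + (p : ℝ))) {b : ℝ} (hb : b ∈ B) :
    ∃ b' ∈ B, b' ≠ b ∧ SameOrbit F b b' := by
  by_contra! hlonely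
  obtain ⟨dm, dp, hne, hd⟩ : ∃ dm dp, dm ≠ dp ∧ HasOneSidedDerivAt F dm dp b := hF.2.2.1 b hb
  obtain ⟨k, c, hk, hFqd⟩ := hF.exists_hasOneSidedDerivAt_iterate
    (fun b' hb' h => by_contra fun h' => hlonely b' hb' h' h) hd q
  have htrans : HasOneSidedDerivAt F^[q] 1 1 b :=
    hFq ▸ ((hasDerivAt_id b).add_const (p : ℝ)).hasOneSidedDerivAt
  obtain ⟨hl, hr⟩ := hFqd.unique htrans
  obtain ⟨hdm, hdp⟩ := hd.nonneg_of_monotone hF.1.2.1.monotone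
  have hc : c ≠ 0 := by rintro rfl; simp at hl
  exact hne ((pow_left_inj₀ hdm hdp (hk hq).ne').1 (mul_right_cancel₀ hc (hl.trans hr.symm)))

end IsPWLLift

theorem Finset.exists_partition_of_equivalence {α : Type*} {r : α → α → Prop}
    (hr : Equivalence r) (B : Finset α) (hmate : ∀ b ∈ B, ∃ b' ∈ B, b' ≠ b ∧ r b b') :
    ∃ P : Finset (Finset α),
      (∀ s ∈ P, s ⊆ B ∧ 2 ≤ s.card ∧ ∀ b ∈ s, ∀ b' ∈ s, r b b') ∧
      (∀ b ∈ B, ∃ s ∈ P, b ∈ s) ∧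
      (∀ s ∈ P, ∀ t ∈ P, s ≠ t → Disjoint s t) ∧
      2 * P.card ≤ B.card := by
  classical
  let cls : α → Finset α := fun b => B.filter (r b)
  have hmem : ∀ {b c}, c ∈ cls b ↔ c ∈ B ∧ r b c := Finset.mem_filter
  have hparts : ∀ s ∈ B.image cls, s ⊆ B ∧ 2 ≤ s.card ∧ ∀ b ∈ s, ∀ b' ∈ s, r b b' := by
    simp only [Finset.forall_mem_image]
    intro b hb
    obtain ⟨b', hb', hne, hbb'⟩ := hmate b hb
    refine ⟨Finset.filter_subset _ _, Finset.one_lt_card.2 ⟨b, hmem.2 ⟨hb, hr.refl b⟩, b',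
      hmem.2 ⟨hb', hbb'⟩, hne.symm⟩, fun c hc c' hc' => ?_⟩
    exact hr.trans (hr.symm (hmem.1 hc).2) (hmem.1 hc').2
  have hdisj : ∀ s ∈ B.image cls, ∀ t ∈ B.image cls, s ≠ t → Disjoint s t := by
    simp only [Finset.forall_mem_image]
    intro b _ b' _ hne
    refine Finset.disjoint_left.2 fun c hc hc' => hne (Finset.ext fun d => ?_)
    have hbb' : r b b' := hr.trans (hmem.1 hc).2 (hr.symm (hmem.1 hc').2)
    simp only [hmem]
    exact and_congr_right fun _ => ⟨hr.trans (hr.symm hbb'), hr.trans hbb'⟩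
  refine ⟨B.image cls, hparts, fun b hb => ⟨cls b, Finset.mem_image_of_mem _ hb,
    hmem.2 ⟨hb, hr.refl b⟩⟩, hdisj, ?_⟩
  calc 2 * (B.image cls).card = (B.image cls).card • 2 := by rw [smul_eq_mul, mul_comm]
    _ ≤ ∑ s ∈ B.image cls, s.card := Finset.card_nsmul_le_sum _ _ _ fun s hs => (hparts s hs).2.1
    _ = ((B.image cls).biUnion id).card :=
      (Finset.card_biUnion fun s hs t ht h => hdisj s hs t ht h).symm
    _ ≤ B.card := Finset.card_le_card (Finset.biUnion_subset.2 fun s hs => (hparts s hs).1)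

/-- if a PWL circle homeomorphism is conjugate to the rigid rotation by
`p/q`, then the orbit of every break point contains another break point; moreover the
break points are partitioned into orbit classes, each of cardinality at least two, so
the number of distinct orbits of break points is at most `n/2`. -/
theorem stmt2 (F : ℝ → ℝ) (B : Finset ℝ) (p : ℤ) (q : ℕ) (hq : 0 < q)
    (hF : IsPWLLift F B)
    (hconj : ∃ H : ℝ → ℝ, IsLift H ∧ ∀ x, H (F x) = H x + (p : ℝ) / q) :
    (∀ b ∈ B, ∃ b' ∈ B, b' ≠ b ∧ SameOrbit F b b') ∧
    ∃ P : Finset (Finset ℝ),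
      (∀ s ∈ P, s ⊆ B ∧ 2 ≤ s.card ∧ ∀ b ∈ s, ∀ b' ∈ s, SameOrbit F b b') ∧
      (∀ b ∈ B, ∃ s ∈ P, b ∈ s) ∧
      (∀ s ∈ P, ∀ t ∈ P, s ≠ t → Disjoint s t) ∧
      2 * P.card ≤ B.card := by
  obtain ⟨H, hH, hsemi⟩ := hconj
  have hFq : F^[q] = (· + (p : ℝ)) := IsLift.iterate_eq_add_of_semiconj hq hH hsemi
  have hmate : ∀ b ∈ B, ∃ b' ∈ B, b' ≠ b ∧ SameOrbit F b b' :=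
    fun _ hb => hF.exists_ne_sameOrbit hq hFq hb
  exact ⟨hmate, Finset.exists_partition_of_equivalence
    (equivalence_sameOrbit hF.1 hq hFq) B hmate⟩
end

section
/- Let f be a piecewise linear orientation-preserving circle homeomorphism conjugate to a rigid rational rotation of rotation number p/q. If break points b_{j_1}, …, b_{j_r} are exactly the break points lying on a single periodic orbit of f, then the product of the jump ratios over these break points equals 1: ∏_{i=1}^r F'(b_{j_i,+}) / F'(b_{j_i,−}) = 1. -/
open MeasureTheory Filter Set

/-!
Pick a break point `b` on the orbit and let `d` be the minimal period of its image on the circle.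
Since `F^q` is a translation, the chain rule makes the product of the right (and of the left)
one-sided derivatives of `F` over `q` consecutive points of any orbit equal to `1`. These
derivatives are nonnegative and depend only on the point of the circle, so the sequence of
them along the orbit of `b` is `d`-periodic and its product over the `d` distinct orbit points
is a `q/d`-th root of `1`, hence `1`. At orbit points that are not break points `F` is affine,
so the two one-sided derivatives agree; the break points on the orbit are exactly the `j i`, each
met once. Dividing the two products leaves `∏ i, dp i / dm i = 1`.
-/

open Function
open scoped Pointwise AddConstMap

theorem vadd_Ici_eq {α : Type*} [AddCommGroup α] [PartialOrder α] [IsOrderedAddMonoid α]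
    (a x : α) : a +ᵥ Ici x = Ici (x + a) := by
  rw [← Set.image_vadd]; simp [add_comm]

theorem vadd_Iic_eq {α : Type*} [AddCommGroup α] [PartialOrder α] [IsOrderedAddMonoid α]
    (a x : α) : a +ᵥ Iic x = Iic (x + a) := by
  rw [← Set.image_vadd]; simp [add_comm]

theorem UnitAddCircle.coe_eq_coe_iff {x y : ℝ} :
    (x : UnitAddCircle) = y ↔ ∃ m : ℤ, x = y + m := by
  simp only [QuotientAddGroup.eq, AddSubgroup.mem_zmultiples_iff, zsmul_one]
  constructor
  · rintro ⟨m, hm⟩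
    exact ⟨-m, by push_cast; linarith⟩
  · rintro ⟨m, rfl⟩
    exact ⟨-m, by push_cast; ring⟩

theorem UnitAddCircle.coe_add_int (x : ℝ) (m : ℤ) : ((x + m : ℝ) : UnitAddCircle) = x :=
  UnitAddCircle.coe_eq_coe_iff.mpr ⟨m, rfl⟩

theorem prod_range_mul_eq_pow_of_periodic {M : Type*} [CommMonoid M] {a : ℕ → M} {d : ℕ}
    (ha : Periodic a d) (e : ℕ) :
    ∏ k ∈ Finset.range (e * d), a k = (∏ k ∈ Finset.range d, a k) ^ e := by
  induction e with
  | zero => simp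
  | succ e ih =>
    rw [Nat.succ_mul, Finset.prod_range_add, ih, pow_succ]
    exact congrArg _ (Finset.prod_congr rfl fun k _ => by rw [add_comm]; exact ha.nat_mul e k)

theorem prod_range_minimalPeriod_eq_one {α M : Type*} [CommSemiring M] [LinearOrder M]
    [IsStrictOrderedRing M] {f : α → α} {x : α} {n : ℕ} {G : α → M}
    (hx : IsPeriodicPt f n x) (hn : 0 < n) (hG : ∀ k, 0 ≤ G (f^[k] x))
    (h : ∏ k ∈ Finset.range n, G (f^[k] x) = 1) :
    ∏ k ∈ Finset.range (minimalPeriod f x), G (f^[k] x) = 1 := by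
  obtain ⟨e, rfl⟩ := hx.minimalPeriod_dvd
  have hperiodic : Periodic (fun k => G (f^[k] x)) (minimalPeriod f x) := fun k => by
    simp only [iterate_add_minimalPeriod_eq]
  rw [mul_comm, prod_range_mul_eq_pow_of_periodic hperiodic] at h
  exact (pow_eq_one_iff_of_nonneg (Finset.prod_nonneg fun k _ => hG k)
    (by rintro rfl; simp at hn)).mp h

section Lift

variable {F : ℝ → ℝ}

theorem map_add_int_of_map_add_one (hF : ∀ x, F (x + 1) = F x + 1) (x : ℝ) (m : ℤ) :
    F (x + m) = F x + m :=
  AddConstMapClass.map_add_int (⟨F, hF⟩ : ℝ →+c[1, 1] ℝ) x m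

theorem derivWithin_int_vadd (hF : ∀ x, F (x + 1) = F x + 1) (m : ℤ) (s : Set ℝ) (x : ℝ) :
    derivWithin F ((m : ℝ) +ᵥ s) (x + m) = derivWithin F s x := by
  rw [← derivWithin_comp_add_const]
  simp_rw [map_add_int_of_map_add_one hF]
  exact derivWithin_add_const _

theorem differentiableWithinAt_int_vadd_iff (hF : ∀ x, F (x + 1) = F x + 1) (m : ℤ)
    (s : Set ℝ) (x : ℝ) :
    DifferentiableWithinAt ℝ F ((m : ℝ) +ᵥ s) (x + m) ↔ DifferentiableWithinAt ℝ F s x := by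
  rw [← differentiableWithinAt_comp_add_right]
  simp_rw [map_add_int_of_map_add_one hF]
  exact differentiableWithinAt_add_const_iff _

theorem periodic_derivWithin_Ici (hF : ∀ x, F (x + 1) = F x + 1) :
    Periodic (fun x => derivWithin F (Ici x) x) 1 := fun x => by
  simpa [vadd_Ici_eq] using derivWithin_int_vadd hF 1 (Ici x) x

theorem periodic_derivWithin_Iic (hF : ∀ x, F (x + 1) = F x + 1) :
    Periodic (fun x => derivWithin F (Iic x) x) 1 := fun x => by
  simpa [vadd_Iic_eq] using derivWithin_int_vadd hF 1 (Iic x) x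

theorem hasDerivWithinAt_iterate_of_mapsTo {𝕜 : Type*} [NontriviallyNormedField 𝕜]
    {G G' : 𝕜 → 𝕜} {s : 𝕜 → Set 𝕜} (hmaps : ∀ x, MapsTo G (s x) (s (G x)))
    (hG : ∀ x, HasDerivWithinAt G (G' x) (s x) x) (n : ℕ) (x : 𝕜) :
    HasDerivWithinAt G^[n] (∏ k ∈ Finset.range n, G' (G^[k] x)) (s x) x := by
  induction n generalizing x with
  | zero => simpa using hasDerivWithinAt_id x (s x)
  | succ n ih =>
    rw [iterate_succ, Finset.prod_range_succ', iterate_zero_apply]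
    simp_rw [iterate_succ_apply]
    exact (ih (G x)).comp x (hG x) (hmaps x)

theorem prod_derivWithin_iterate_eq_one {𝕜 : Type*} [NontriviallyNormedField 𝕜]
    {G : 𝕜 → 𝕜} {s : 𝕜 → Set 𝕜} (hmaps : ∀ x, MapsTo G (s x) (s (G x)))
    (hdiff : ∀ x, DifferentiableWithinAt 𝕜 G (s x) x) (huniq : ∀ x, UniqueDiffWithinAt 𝕜 (s x) x)
    {q : ℕ} {p : 𝕜} (hper : ∀ x, G^[q] x = x + p) (x : 𝕜) :
    ∏ k ∈ Finset.range q, derivWithin G (s (G^[k] x)) (G^[k] x) = 1 :=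
  (huniq x).eq_deriv _
    (hasDerivWithinAt_iterate_of_mapsTo hmaps (fun y => (hdiff y).hasDerivWithinAt) q x)
    (by rw [funext hper]; simpa using (hasDerivWithinAt_id x (s x)).add_const p)

theorem periodic_coe_comp (hF : ∀ x, F (x + 1) = F x + 1) :
    Periodic (fun x => (F x : UnitAddCircle)) 1 := fun x => by
  simp [hF]

def circleMapOfLift (F : ℝ → ℝ) (hF : ∀ x, F (x + 1) = F x + 1) :
    UnitAddCircle → UnitAddCircle :=
  (periodic_coe_comp hF).lift

theorem circleMapOfLift_iterate_coe (hF : ∀ x, F (x + 1) = F x + 1) (n : ℕ) (x : ℝ) :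
    (circleMapOfLift F hF)^[n] x = ↑(F^[n] x) :=
  ((show Semiconj ((↑) : ℝ → UnitAddCircle) F (circleMapOfLift F hF) from fun _ => rfl)
    |>.iterate_right n x).symm

theorem isPeriodicPt_circleMapOfLift (hF : ∀ x, F (x + 1) = F x + 1) {q : ℕ} {p : ℤ}
    (hper : ∀ x, F^[q] x = x + p) (z : UnitAddCircle) :
    IsPeriodicPt (circleMapOfLift F hF) q z :=
  QuotientAddGroup.induction_on z fun x => by
    rw [IsPeriodicPt, IsFixedPt, circleMapOfLift_iterate_coe, hper, UnitAddCircle.coe_add_int]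

theorem exists_iterate_lt_minimalPeriod_of_sameOrbit (hF : ∀ x, F (x + 1) = F x + 1)
    {q : ℕ} {p : ℤ} (hq : 0 < q) (hper : ∀ x, F^[q] x = x + p) {y b : ℝ}
    (h : SameOrbit F y b) :
    ∃ k < minimalPeriod (circleMapOfLift F hF) b, (circleMapOfLift F hF)^[k] b = y := by
  set f := circleMapOfLift F hF
  suffices ∃ n, f^[n] b = y by
    obtain ⟨n, hn⟩ := this
    exact ⟨n % minimalPeriod f b,
      Nat.mod_lt _ ((isPeriodicPt_circleMapOfLift hF hper _).minimalPeriod_pos hq),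
      by rw [iterate_mod_minimalPeriod_eq, hn]⟩
  obtain ⟨n, m, h | h⟩ := h
  · have hyb : f^[n] y = b := by
      rw [circleMapOfLift_iterate_coe, h, UnitAddCircle.coe_add_int]
    -- `y` is `q`-periodic, so running on from `b` for `(q - 1) n` steps comes back to `y`.
    refine ⟨(q - 1) * n, ?_⟩
    rw [← hyb, ← iterate_add_apply, ← add_one_mul, Nat.sub_one_add_one hq.ne']
    exact (isPeriodicPt_circleMapOfLift hF hper _).mul_const n
  · exact ⟨n, by rw [circleMapOfLift_iterate_coe, h, UnitAddCircle.coe_add_int]⟩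

theorem prod_orbit_lift_derivWithin_eq_one {s : ℝ → Set ℝ} (hF : ∀ x, F (x + 1) = F x + 1)
    (hmono : Monotone F) (hmaps : ∀ x, MapsTo F (s x) (s (F x)))
    (hdiff : ∀ x, DifferentiableWithinAt ℝ F (s x) x)
    (huniq : ∀ x, UniqueDiffWithinAt ℝ (s x) x)
    (hD : Periodic (fun x => derivWithin F (s x) x) 1)
    {q : ℕ} {p : ℤ} (hq : 0 < q) (hper : ∀ x, F^[q] x = x + p) [DecidableEq UnitAddCircle]
    (b : ℝ) :
    ∏ y ∈ (Finset.range (minimalPeriod (circleMapOfLift F hF) b)).image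
      (fun k => (circleMapOfLift F hF)^[k] b), hD.lift y = 1 := by
  have hcoe : ∀ k, hD.lift ((circleMapOfLift F hF)^[k] b) =
      derivWithin F (s (F^[k] b)) (F^[k] b) := fun k => by
    rw [circleMapOfLift_iterate_coe]; rfl
  rw [Finset.prod_image (iterate_injOn_Iio_minimalPeriod.mono (by simp))]
  refine prod_range_minimalPeriod_eq_one (isPeriodicPt_circleMapOfLift hF hper _) hq
    (fun k => ?_) ?_
  · rw [hcoe]; exact (hmono.monotoneOn _).derivWithin_nonneg
  · simp_rw [hcoe]; exact prod_derivWithin_iterate_eq_one hmaps hdiff huniq hper b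

end Lift

namespace IsPWLLift

variable {F : ℝ → ℝ} {B : Finset ℝ}

theorem injOn_coe (hF : IsPWLLift F B) : InjOn ((↑) : ℝ → UnitAddCircle) B :=
  fun x hx y hy h => (AddCircle.coe_eq_coe_iff_of_mem_Ico (a := 0)
    (by simpa using hF.2.1 hx) (by simpa using hF.2.1 hy)).mp h

theorem differentiableAt (hF : IsPWLLift F B) {x : ℝ} (hx : ∀ b ∈ B, ∀ k : ℤ, x ≠ b + k) :
    DifferentiableAt ℝ F x := by
  obtain ⟨ε, hε, a, c, hac⟩ := hF.2.2.2 x hx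
  have hnear : (fun y => a * y + c) =ᶠ[nhds x] F :=
    Metric.eventually_nhds_iff.mpr ⟨ε, hε, fun y hy => (hac y (by rwa [← Real.dist_eq])).symm⟩
  exact ((differentiableAt_id.const_mul a).add_const c).congr_of_eventuallyEq hnear.symm

theorem derivWithin_Ici_eq_derivWithin_Iic (hF : IsPWLLift F B) {x : ℝ}
    (hx : ∀ b ∈ B, ∀ k : ℤ, x ≠ b + k) :
    derivWithin F (Ici x) x = derivWithin F (Iic x) x := by
  rw [(hF.differentiableAt hx).derivWithin (uniqueDiffWithinAt_Ici x),
    (hF.differentiableAt hx).derivWithin (uniqueDiffWithinAt_Iic x)]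

theorem differentiableWithinAt {s : ℝ → Set ℝ} (hF : IsPWLLift F B)
    (hs : ∀ x (m : ℤ), s (x + m) = (m : ℝ) +ᵥ s x)
    (hB : ∀ b ∈ B, DifferentiableWithinAt ℝ F (s b) b) (x : ℝ) :
    DifferentiableWithinAt ℝ F (s x) x := by
  by_cases hx : ∀ b ∈ B, ∀ k : ℤ, x ≠ b + k
  · exact (hF.differentiableAt hx).differentiableWithinAt
  · push Not at hx
    obtain ⟨b, hb, k, rfl⟩ := hx
    rw [hs, differentiableWithinAt_int_vadd_iff hF.1.2.2]
    exact hB b hb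

theorem differentiableWithinAt_Ici (hF : IsPWLLift F B) (x : ℝ) :
    DifferentiableWithinAt ℝ F (Ici x) x :=
  hF.differentiableWithinAt (fun x _ => (vadd_Ici_eq _ x).symm)
    (fun b hb => by
      obtain ⟨_, _, -, -, hright⟩ := hF.2.2.1 b hb
      exact hright.differentiableWithinAt) x

theorem differentiableWithinAt_Iic (hF : IsPWLLift F B) (x : ℝ) :
    DifferentiableWithinAt ℝ F (Iic x) x :=
  hF.differentiableWithinAt (fun x _ => (vadd_Iic_eq _ x).symm)
    (fun b hb => by
      obtain ⟨_, _, -, hleft, -⟩ := hF.2.2.1 b hb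
      exact hleft.differentiableWithinAt) x

end IsPWLLift

theorem stmt3_general (F : ℝ → ℝ) (B : Finset ℝ) (p : ℤ) (q : ℕ) (hq : 0 < q)
    (hF : IsPWLLift F B) (hper : ∀ x, F^[q] x = x + p)
    (r : ℕ) (j : Fin r → ℝ) (hinj : Function.Injective j)
    (hjB : ∀ i, j i ∈ B)
    (horb : ∀ i i', SameOrbit F (j i) (j i'))
    (hexact : ∀ b ∈ B, (∃ i, SameOrbit F b (j i)) → ∃ i, b = j i)
    (dm dp : Fin r → ℝ)
    (hdm : ∀ i, HasDerivWithinAt F (dm i) (Set.Iic (j i)) (j i))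
    (hdp : ∀ i, HasDerivWithinAt F (dp i) (Set.Ici (j i)) (j i)) :
    ∏ i, dp i / dm i = 1 := by
  classical
  obtain _ | r := r
  · simp
  have hF1 := hF.1.2.2
  have hmono := hF.1.2.1.monotone
  set f := circleMapOfLift F hF1
  set O := (Finset.range (minimalPeriod f (j 0))).image fun k => f^[k] (j 0)
  set J : Fin (r + 1) → UnitAddCircle := fun i => j i
  have hJ : Injective J := fun i i' h => hinj (hF.injOn_coe (hjB i) (hjB i') h)
  have hJO : Finset.univ.image J ⊆ O := Finset.image_subset_iff.mpr fun i _ => by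
    obtain ⟨k, hk, hki⟩ := exists_iterate_lt_minimalPeriod_of_sameOrbit hF1 hq hper (horb i 0)
    exact Finset.mem_image.mpr ⟨k, Finset.mem_range.mpr hk, hki⟩
  have hoff : ∀ y ∈ O \ Finset.univ.image J,
      (periodic_derivWithin_Ici hF1).lift y = (periodic_derivWithin_Iic hF1).lift y := by
    intro y hy
    obtain ⟨hyO, hyJ⟩ := Finset.mem_sdiff.mp hy
    obtain ⟨k, -, rfl⟩ := Finset.mem_image.mp hyO
    rw [circleMapOfLift_iterate_coe]
    refine hF.derivWithin_Ici_eq_derivWithin_Iic fun b hb m hm => hyJ ?_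
    obtain ⟨i, rfl⟩ := hexact b hb ⟨0, k, m, Or.inr hm⟩
    exact Finset.mem_image.mpr ⟨i, Finset.mem_univ _,
      by rw [circleMapOfLift_iterate_coe, hm, UnitAddCircle.coe_add_int]⟩
  have hright := prod_orbit_lift_derivWithin_eq_one (s := Ici) hF1 hmono
    (fun _ => hmono.mapsTo_Ici) hF.differentiableWithinAt_Ici uniqueDiffWithinAt_Ici
    (periodic_derivWithin_Ici hF1) hq hper (j 0)
  have hleft := prod_orbit_lift_derivWithin_eq_one (s := Iic) hF1 hmono
    (fun _ => hmono.mapsTo_Iic) hF.differentiableWithinAt_Iic uniqueDiffWithinAt_Iic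
    (periodic_derivWithin_Iic hF1) hq hper (j 0)
  rw [← Finset.prod_sdiff hJO, Finset.prod_congr rfl hoff, Finset.prod_image hJ.injOn] at hright
  rw [← Finset.prod_sdiff hJO, Finset.prod_image hJ.injOn] at hleft
  simp only [J, Periodic.lift_coe, (hdp _).derivWithin (uniqueDiffWithinAt_Ici _),
    (hdm _).derivWithin (uniqueDiffWithinAt_Iic _)] at hright hleft
  -- Now `hright : C * ∏ i, dp i = 1` and `hleft : C * ∏ i, dm i = 1` with the same `C`.
  rw [Finset.prod_div_distrib, div_eq_one_iff_eq (right_ne_zero_of_mul_eq_one hleft)]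
  exact mul_left_cancel₀ (left_ne_zero_of_mul_eq_one hleft) (hright.trans hleft.symm)

/-- for a PWL circle homeomorphism conjugate to a rigid rational rotation
(`F^q(x) = x + p`), the product of the jump ratios over the break points lying on any
single periodic orbit equals one. -/
theorem stmt3 (F : ℝ → ℝ) (B : Finset ℝ) (p : ℤ) (q : ℕ) (hq : 0 < q)
    (hF : IsPWLLift F B) (hper : ∀ x, F^[q] x = x + p)
    (r : ℕ) (hr : 0 < r) (j : Fin r → ℝ) (hinj : Function.Injective j)
    (hjB : ∀ i, j i ∈ B)
    (horb : ∀ i i', SameOrbit F (j i) (j i'))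
    (hexact : ∀ b ∈ B, (∃ i, SameOrbit F b (j i)) → ∃ i, b = j i)
    (dm dp : Fin r → ℝ)
    (hdm : ∀ i, HasDerivWithinAt F (dm i) (Set.Iic (j i)) (j i))
    (hdp : ∀ i, HasDerivWithinAt F (dp i) (Set.Ici (j i)) (j i))
    (hdm0 : ∀ i, dm i ≠ 0) :
    ∏ i, dp i / dm i = 1 :=
  stmt3_general F B p q hq hF hper r j hinj hjB horb hexact dm dp hdm hdp
end

section
/- Let F be a lift of a PWL circle homeomorphism with rotation number p/q that is NOT conjugate to a rigid rotation. Then the one-sided derivatives of the iterates F^k are unbounded: there exists a point z and a one-sided derivative such that (F^{qm})'(z_±) → ∞ as m → ∞. -/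
open MeasureTheory Filter Set

/-!
Put `G x = F^[q] x - p`, so that `F^[q*m] = G^[m] + m p`. Rationality of the rotation number gives
fixed points of `G`, and as `G ≠ id` some non-fixed point lies between two of them; the fixed point
nearest to it is repelled from by `G` on that side. Break points of `F` are isolated, so `G` is
affine on each one-sided neighbourhood of this fixed point `u`; repulsion forces the slope `a` on
the repelling side to exceed `1`, and then `G^[m]` is affine with slope `a^m` on that side of `u`.
-/

open Topology

def EventuallyAffine (f : ℝ → ℝ) (l : Filter ℝ) : Prop :=
  ∃ a c : ℝ, ∀ᶠ x in l, f x = a * x + c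

namespace EventuallyAffine

variable {f g : ℝ → ℝ} {l l' : Filter ℝ}

theorem sub_const (h : EventuallyAffine f l) (b : ℝ) : EventuallyAffine (fun x => f x - b) l := by
  obtain ⟨a, c, h⟩ := h
  exact ⟨a, c - b, h.mono fun x hx => by simp only [hx]; ring⟩

theorem comp (hf : EventuallyAffine f l') (hg : EventuallyAffine g l) (hgl : Tendsto g l l') :
    EventuallyAffine (f ∘ g) l := by
  obtain ⟨a, c, hf⟩ := hf
  obtain ⟨b, d, hg⟩ := hg
  refine ⟨a * b, a * d + c, ?_⟩
  filter_upwards [hg, hgl.eventually hf] with x hgx hfx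
  rw [Function.comp_apply, hfx, hgx]
  ring

theorem iterate {L : ℝ → Filter ℝ} (hf : ∀ x, EventuallyAffine f (L x))
    (hL : ∀ x, Tendsto f (L x) (L (f x))) (n : ℕ) (x : ℝ) : EventuallyAffine f^[n] (L x) := by
  induction n generalizing x with
  | zero => exact ⟨1, 0, by simp⟩
  | succ n ih =>
    rw [Function.iterate_succ]
    exact (ih (f x)).comp (hf x) (hL x)

theorem insert_of_continuousWithinAt {s : Set ℝ} {u : ℝ} [(𝓝[s] u).NeBot]
    (h : EventuallyAffine f (𝓝[s] u)) (hf : ContinuousWithinAt f s u) :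
    EventuallyAffine f (𝓝[insert u s] u) := by
  obtain ⟨a, c, h⟩ := h
  have hu : f u = a * u + c := by
    refine tendsto_nhds_unique hf (Tendsto.congr' (EventuallyEq.symm h) ?_)
    exact ((continuous_const_mul a).add continuous_const).continuousWithinAt
  exact ⟨a, c, nhdsWithin_insert u s ▸ eventually_sup.2 ⟨hu, h⟩⟩

end EventuallyAffine

theorem IsPreconnected.eventuallyAffine_principal {f : ℝ → ℝ} {s : Set ℝ} (hs : IsPreconnected s)
    (h : ∀ x ∈ s, EventuallyAffine f (𝓝 x)) : EventuallyAffine f (𝓟 s) := by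
  -- `g x` is (slope, intercept) of the affine germ of `f` at `x`, so `g` is locally constant on `s`
  set g : ℝ → ℝ × ℝ := fun x => (deriv f x, f x - deriv f x * x)
  have hg : ∀ x ∈ s, ∀ᶠ y in 𝓝 x, g y = g x := by
    intro x hx
    obtain ⟨a, c, hac⟩ := h x hx
    have hgerm : ∀ᶠ y in 𝓝 x, g y = (a, c) := by
      filter_upwards [hac.eventually_nhds] with y hy
      have hderiv : deriv f y = a :=
        (EventuallyEq.deriv_eq hy).trans (by simp)
      simp [g, hderiv, hy.self_of_nhds]
    filter_upwards [hgerm] with y hy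
    rw [hy, hgerm.self_of_nhds]
  rcases s.eq_empty_or_nonempty with rfl | ⟨x₀, hx₀⟩
  · exact ⟨0, 0, by simp⟩
  refine ⟨(g x₀).1, (g x₀).2, eventually_principal.2 fun x hx => ?_⟩
  have hconst : g x₀ = g x :=
    hs.induction₂ (fun x y => g x = g y)
      (fun x hx => ((hg x hx).filter_mono nhdsWithin_le_nhds).mono fun _ hy => hy.symm)
      (fun _ _ _ _ _ _ => Eq.trans) (fun _ _ _ _ => Eq.symm) hx₀ hx
  obtain ⟨hslope, hintercept⟩ := Prod.ext_iff.1 hconst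
  simp only [g] at hslope hintercept ⊢
  rw [hintercept, hslope]
  ring

theorem EventuallyAffine.of_hasBasis {f : ℝ → ℝ} {l : Filter ℝ} {ι : Sort*} {p : ι → Prop}
    {s : ι → Set ℝ} (hl : l.HasBasis p s) (hs : ∀ i, p i → IsPreconnected (s i))
    (h : ∀ᶠ x in l, EventuallyAffine f (𝓝 x)) : EventuallyAffine f l := by
  obtain ⟨i, hi, hsub⟩ := hl.eventually_iff.1 h
  obtain ⟨a, c, hac⟩ := (hs i hi).eventuallyAffine_principal fun x hx => hsub hx
  exact ⟨a, c, hl.eventually_iff.2 ⟨i, hi, hac⟩⟩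

theorem eventually_nhdsNE_ne_add_intCast (b u : ℝ) : ∀ᶠ x in 𝓝[≠] u, ∀ k : ℤ, x ≠ b + k := by
  rw [← nhdsLT_sup_nhdsGT, eventually_sup]
  constructor
  · have hlt : b + (⌈u - b⌉ - 1 : ℤ) < u := by push_cast; linarith [Int.ceil_lt_add_one (u - b)]
    filter_upwards [Ioo_mem_nhdsLT hlt] with x ⟨hx₁, hx₂⟩ k rfl
    have h₁ : k < ⌈u - b⌉ := Int.lt_ceil.2 (by linarith)
    have h₂ : ⌈u - b⌉ - 1 < k := by exact_mod_cast (add_lt_add_iff_left b).1 hx₁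
    omega
  · have hlt : u < b + (⌊u - b⌋ + 1 : ℤ) := by push_cast; linarith [Int.lt_floor_add_one (u - b)]
    filter_upwards [Ioo_mem_nhdsGT hlt] with x ⟨hx₁, hx₂⟩ k rfl
    have h₁ : ⌊u - b⌋ < k := Int.floor_lt.2 (by linarith)
    have h₂ : k < ⌊u - b⌋ + 1 := by exact_mod_cast (add_lt_add_iff_left b).1 hx₂
    omega

namespace IsLift

variable {F : ℝ → ℝ}

def toCircleDeg1Lift (hF : IsLift F) : CircleDeg1Lift :=
  ⟨⟨F, hF.2.1.monotone⟩, hF.2.2⟩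

@[simp]
theorem coe_toCircleDeg1Lift (hF : IsLift F) : ⇑hF.toCircleDeg1Lift = F :=
  rfl

theorem iterate_add_intCast (hF : IsLift F) (n : ℕ) (x : ℝ) (k : ℤ) :
    F^[n] (x + k) = F^[n] x + k := by
  have h := (hF.toCircleDeg1Lift ^ n).map_add_int x k
  rwa [CircleDeg1Lift.coe_pow, coe_toCircleDeg1Lift] at h

theorem exists_iterate_eq_add {p : ℤ} {q : ℕ} (hF : IsLift F) (hq : 0 < q)
    (hrot : HasRotNum F (p / q)) : ∃ z, F^[q] z = z + p := by
  have hτ : hF.toCircleDeg1Lift.translationNumber = p / q := by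
    refine tendsto_nhds_unique (hF.toCircleDeg1Lift.tendsto_translationNumber 0) ?_
    simpa only [CircleDeg1Lift.coe_pow, coe_toCircleDeg1Lift] using hrot 0
  simpa only [CircleDeg1Lift.coe_pow, coe_toCircleDeg1Lift] using
    (CircleDeg1Lift.translationNumber_eq_rat_iff _ hF.1 hq).1 hτ

end IsLift

theorem Continuous.tendsto_nhdsGE_of_monotone {α β : Type*} [TopologicalSpace α] [Preorder α]
    [TopologicalSpace β] [Preorder β] {f : α → β} (hf : Continuous f) (hmono : Monotone f)
    (x : α) : Tendsto f (𝓝[≥] x) (𝓝[≥] f x) :=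
  hf.continuousWithinAt.tendsto_nhdsWithin fun _ hy => hmono hy

theorem Continuous.tendsto_nhdsLE_of_monotone {α β : Type*} [TopologicalSpace α] [Preorder α]
    [TopologicalSpace β] [Preorder β] {f : α → β} (hf : Continuous f) (hmono : Monotone f)
    (x : α) : Tendsto f (𝓝[≤] x) (𝓝[≤] f x) :=
  hf.continuousWithinAt.tendsto_nhdsWithin fun _ hy => hmono hy

namespace IsPWLLift

variable {F : ℝ → ℝ} {B : Finset ℝ}

theorem eventually_eventuallyAffine_nhds (hF : IsPWLLift F B) (u : ℝ) :
    ∀ᶠ x in 𝓝[≠] u, EventuallyAffine F (𝓝 x) := by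
  filter_upwards [(Finset.eventually_all B).2 fun b _ => eventually_nhdsNE_ne_add_intCast b u]
    with x hx
  obtain ⟨ε, hε, a, c, hac⟩ := hF.2.2.2 x hx
  exact ⟨a, c, Metric.eventually_nhds_iff.2 ⟨ε, hε, fun y hy => hac y hy⟩⟩

theorem eventuallyAffine_nhdsGE (hF : IsPWLLift F B) (u : ℝ) : EventuallyAffine F (𝓝[≥] u) := by
  rw [← Ioi_insert]
  refine EventuallyAffine.insert_of_continuousWithinAt ?_ hF.1.1.continuousWithinAt
  exact EventuallyAffine.of_hasBasis (nhdsGT_basis u) (fun _ _ => isPreconnected_Ioo)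
    ((hF.eventually_eventuallyAffine_nhds u).filter_mono (nhdsWithin_mono _ fun _ => ne_of_gt))

theorem eventuallyAffine_nhdsLE (hF : IsPWLLift F B) (u : ℝ) : EventuallyAffine F (𝓝[≤] u) := by
  rw [← Iio_insert]
  refine EventuallyAffine.insert_of_continuousWithinAt ?_ hF.1.1.continuousWithinAt
  exact EventuallyAffine.of_hasBasis (nhdsLT_basis u) (fun _ _ => isPreconnected_Ioo)
    ((hF.eventually_eventuallyAffine_nhds u).filter_mono (nhdsWithin_mono _ fun _ => ne_of_lt))

theorem eventuallyAffine_iterate_nhdsGE (hF : IsPWLLift F B) (n : ℕ) (u : ℝ) :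
    EventuallyAffine F^[n] (𝓝[≥] u) :=
  EventuallyAffine.iterate hF.eventuallyAffine_nhdsGE
    (hF.1.1.tendsto_nhdsGE_of_monotone hF.1.2.1.monotone) n u

theorem eventuallyAffine_iterate_nhdsLE (hF : IsPWLLift F B) (n : ℕ) (u : ℝ) :
    EventuallyAffine F^[n] (𝓝[≤] u) :=
  EventuallyAffine.iterate hF.eventuallyAffine_nhdsLE
    (hF.1.1.tendsto_nhdsLE_of_monotone hF.1.2.1.monotone) n u

end IsPWLLift

section FixedPoint

variable {G : ℝ → ℝ} {y z : ℝ}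

theorem exists_fixedPoint_eventually_lt_nhdsLT (hG : Continuous G) (hyz : y ≤ z) (hz : G z = z)
    (hy : G y < y) : ∃ u, G u = u ∧ ∀ᶠ x in 𝓝[<] u, G x < x := by
  obtain ⟨u, ⟨⟨hyu, huz⟩, hu⟩, hleast⟩ :=
    (isCompact_Icc.inter_right (isClosed_eq hG continuous_id)).exists_isLeast ⟨z, ⟨hyz, le_rfl⟩, hz⟩
  have hyu : y < u := hyu.lt_of_ne (by rintro rfl; exact hy.ne hu)
  refine ⟨u, hu, ?_⟩
  filter_upwards [Ico_mem_nhdsLT hyu] with x ⟨hyx, hxu⟩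
  by_contra! hx
  obtain ⟨c, ⟨hyc, hcx⟩, hc⟩ := intermediate_value_Icc hyx (hG.sub continuous_id).continuousOn
    (show (0 : ℝ) ∈ Icc (G y - y) (G x - x) from ⟨by linarith, by linarith⟩)
  linarith [hleast ⟨⟨hyc, by linarith⟩, sub_eq_zero.1 hc⟩]

theorem exists_fixedPoint_eventually_gt_nhdsGT (hG : Continuous G) (hzy : z ≤ y) (hz : G z = z)
    (hy : y < G y) : ∃ u, G u = u ∧ ∀ᶠ x in 𝓝[>] u, x < G x := by
  obtain ⟨u, ⟨⟨hzu, huy⟩, hu⟩, hgreatest⟩ :=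
    (isCompact_Icc.inter_right (isClosed_eq hG continuous_id)).exists_isGreatest
      ⟨z, ⟨le_rfl, hzy⟩, hz⟩
  have huy : u < y := huy.lt_of_ne (by rintro rfl; exact hy.ne' hu)
  refine ⟨u, hu, ?_⟩
  filter_upwards [Ioc_mem_nhdsGT huy] with x ⟨hux, hxy⟩
  by_contra! hx
  obtain ⟨c, ⟨hxc, hcy⟩, hc⟩ := intermediate_value_Icc hxy (hG.sub continuous_id).continuousOn
    (show (0 : ℝ) ∈ Icc (G x - x) (G y - y) from ⟨by linarith, by linarith⟩)
  linarith [hgreatest ⟨⟨by linarith, hcy⟩, sub_eq_zero.1 hc⟩]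

theorem exists_repelling_fixedPoint {z₁ z₂ : ℝ} (hG : Continuous G) (h₁ : z₁ ≤ y) (h₂ : y ≤ z₂)
    (hz₁ : G z₁ = z₁) (hz₂ : G z₂ = z₂) (hy : G y ≠ y) :
    ∃ u, G u = u ∧ ((∀ᶠ x in 𝓝[<] u, G x < x) ∨ ∀ᶠ x in 𝓝[>] u, x < G x) := by
  rcases hy.lt_or_gt with hy | hy
  · obtain ⟨u, hu, hrep⟩ := exists_fixedPoint_eventually_lt_nhdsLT hG h₂ hz₂ hy
    exact ⟨u, hu, .inl hrep⟩
  · obtain ⟨u, hu, hrep⟩ := exists_fixedPoint_eventually_gt_nhdsGT hG h₁ hz₁ hy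
    exact ⟨u, hu, .inr hrep⟩

end FixedPoint

section Expansion

variable {G : ℝ → ℝ} {u a : ℝ}

theorem eventually_iterate_eq_add_pow_mul {l : Filter ℝ} (hG : Tendsto G l l)
    (h : ∀ᶠ x in l, G x = u + a * (x - u)) (m : ℕ) :
    ∀ᶠ x in l, G^[m] x = u + a ^ m * (x - u) := by
  induction m with
  | zero => simp
  | succ m ih =>
    filter_upwards [h, hG.eventually ih] with x hx hGx
    rw [Function.iterate_succ_apply, hGx, hx]
    ring

/-- `0 < (G x - x) * (x - u)` says that `G` moves `x` further away from `u`, on either side. -/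
theorem one_lt_of_eventually_repelling {l : Filter ℝ} [l.NeBot]
    (haff : ∀ᶠ x in l, G x = u + a * (x - u)) (hrep : ∀ᶠ x in l, 0 < (G x - x) * (x - u)) :
    1 < a := by
  obtain ⟨x, hx, hrx⟩ := (haff.and hrep).exists
  rw [hx] at hrx
  nlinarith [sq_nonneg (x - u)]

theorem exists_one_lt_hasDerivWithinAt_iterate {s : Set ℝ} {l : Filter ℝ} [l.NeBot]
    (hl : l ≤ 𝓝[s] u) (hu : u ∈ s) (hG : ContinuousWithinAt G s u) (hmaps : MapsTo G s s)
    (hfix : G u = u) (haff : EventuallyAffine G (𝓝[s] u))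
    (hrep : ∀ᶠ x in l, 0 < (G x - x) * (x - u)) :
    ∃ a, 1 < a ∧ ∀ m : ℕ, HasDerivWithinAt G^[m] (a ^ m) s u := by
  obtain ⟨a, c, hac⟩ := haff
  have hc : c = u - a * u := by linarith [hac.self_of_nhdsWithin hu]
  have haff : ∀ᶠ x in 𝓝[s] u, G x = u + a * (x - u) :=
    hac.mono fun x hx => by rw [hx, hc]; ring
  have hT : Tendsto G (𝓝[s] u) (𝓝[s] u) := by simpa [hfix] using hG.tendsto_nhdsWithin hmaps
  refine ⟨a, one_lt_of_eventually_repelling (haff.filter_mono hl) hrep, fun m => ?_⟩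
  have hlin : HasDerivAt (fun x => u + a ^ m * (x - u)) (a ^ m) u := by
    simpa using (((hasDerivAt_id u).sub_const u).const_mul (a ^ m)).const_add u
  exact hlin.hasDerivWithinAt.congr_of_eventuallyEq_of_mem
    (eventually_iterate_eq_add_pow_mul hT haff m) hu

theorem exists_hasDerivWithinAt_iterate_tendsto_atTop (hG : Continuous G) (hmono : Monotone G)
    (hle : EventuallyAffine G (𝓝[≤] u)) (hge : EventuallyAffine G (𝓝[≥] u)) (hfix : G u = u)
    (hrep : (∀ᶠ x in 𝓝[<] u, G x < x) ∨ ∀ᶠ x in 𝓝[>] u, x < G x) :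
    ∃ d : ℕ → ℝ, (∀ m : ℕ, HasDerivWithinAt G^[m] (d m) (Iic u) u ∨
      HasDerivWithinAt G^[m] (d m) (Ici u) u) ∧ Tendsto d atTop atTop := by
  rcases hrep with hrep | hrep
  · obtain ⟨a, ha, hd⟩ := exists_one_lt_hasDerivWithinAt_iterate
      (nhdsWithin_mono _ Iio_subset_Iic_self) self_mem_Iic hG.continuousWithinAt
      (fun x hx => hfix ▸ hmono hx) hfix hle
      (by filter_upwards [hrep, self_mem_nhdsWithin] with x hGx hxu
          exact mul_pos_of_neg_of_neg (by linarith) (by linarith [mem_Iio.1 hxu]))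
    exact ⟨(a ^ ·), fun m => .inl (hd m), tendsto_pow_atTop_atTop_of_one_lt ha⟩
  · obtain ⟨a, ha, hd⟩ := exists_one_lt_hasDerivWithinAt_iterate
      (nhdsWithin_mono _ Ioi_subset_Ici_self) self_mem_Ici hG.continuousWithinAt
      (fun x hx => hfix ▸ hmono hx) hfix hge
      (by filter_upwards [hrep, self_mem_nhdsWithin] with x hGx hux
          exact mul_pos (by linarith) (by linarith [mem_Ioi.1 hux]))
    exact ⟨(a ^ ·), fun m => .inr (hd m), tendsto_pow_atTop_atTop_of_one_lt ha⟩

end Expansion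

theorem iterate_eq_iterate_sub_add {T : ℝ → ℝ} {c : ℝ} (hT : ∀ x, T (x + c) = T x + c) (m : ℕ) :
    T^[m] = fun x => (fun y => T y - c)^[m] x + m * c := by
  have hcomm : Function.Commute (· + c) (fun y => T y - c) := fun y => by
    simp only [hT]; ring
  have hT' : T = (· + c) ∘ (fun y => T y - c) := by ext; simp
  conv_lhs => rw [hT', hcomm.comp_iterate]
  ext x
  simp [nsmul_eq_mul, add_comm]

/-- if a PWL circle homeomorphism with rotation number `p/q` is not
conjugate to a rigid rotation (i.e. `F^q` is not the translation by `p`), then at some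
point the one-sided derivatives of `F^{qm}` tend to infinity. -/
theorem stmt10 (F : ℝ → ℝ) (B : Finset ℝ) (p : ℤ) (q : ℕ) (hq : 0 < q)
    (hF : IsPWLLift F B) (hrot : HasRotNum F ((p : ℝ) / q))
    (hnconj : ¬ ∀ x, F^[q] x = x + p) :
    ∃ z : ℝ, ∃ d : ℕ → ℝ,
      (∀ m : ℕ, HasDerivWithinAt (F^[q * m]) (d m) (Set.Iic z) z ∨
        HasDerivWithinAt (F^[q * m]) (d m) (Set.Ici z) z) ∧
      Filter.Tendsto d Filter.atTop Filter.atTop := by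
  set G : ℝ → ℝ := fun x => F^[q] x - p
  have hGcont : Continuous G := (hF.1.1.iterate q).sub continuous_const
  have hGmono : Monotone G := fun x y hxy => sub_le_sub_right ((hF.1.2.1.iterate q).monotone hxy) _
  obtain ⟨z, hz⟩ := hF.1.exists_iterate_eq_add hq hrot
  have hGz : ∀ k : ℤ, G (z + k) = z + k := fun k => by
    simp only [G, hF.1.iterate_add_intCast, hz]; ring
  obtain ⟨y, hy⟩ := not_forall.1 hnconj
  obtain ⟨u, hu, hrep⟩ := exists_repelling_fixedPoint (y := y) hGcont
    (by linarith [Int.floor_le (y - z)]) (by linarith [Int.le_ceil (y - z)])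
    (hGz ⌊y - z⌋) (hGz ⌈y - z⌉) (fun h => hy (by simp only [G] at h; linarith))
  obtain ⟨d, hd, hd_tendsto⟩ := exists_hasDerivWithinAt_iterate_tendsto_atTop hGcont hGmono
    ((hF.eventuallyAffine_iterate_nhdsLE q u).sub_const p)
    ((hF.eventuallyAffine_iterate_nhdsGE q u).sub_const p) hu hrep
  refine ⟨u, d, fun m => ?_, hd_tendsto⟩
  rw [Function.iterate_mul, iterate_eq_iterate_sub_add (fun x => hF.1.iterate_add_intCast q x p)]
  exact (hd m).imp (·.add_const _) (·.add_const _)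
end

section
/- Let G_μ(x) = x + (G(μ,x)) be a family of increasing lifts with C₃μ < G_μ(x) − x < C₄μ for μ > 0, and suppose on an interval [M, m'] with no fixed points, G_μ(x) = y + Aμ + S(x − y) + O(μ²) in linear form with S = 1 + O(μ²), A > 0. Then the number of iterates n needed for the orbit of M to exceed m' satisfies n = (m' − M)/(Aμ) + O(1) as μ → 0⁺. -/
open MeasureTheory Filter Set

set_option maxHeartbeats 1000000 in
/-- passage time through an interval `[M, m']` with no fixed points,
on which `G_μ` is affine with slope `1 + O(μ²)` and offset `Aμ + O(μ²)`, `A > 0`: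
the least `n` with `G_μ^n(M) > m'` satisfies `n = (m' - M)/(Aμ) + O(1)` as
`μ → 0⁺`. -/
theorem stmt14 (G : ℝ → ℝ → ℝ) (a s : ℝ → ℝ) (M m' A C : ℝ)
    (hMm : M < m') (hA : 0 < A) (hC : 0 ≤ C)
    (haff : ∀ μ x : ℝ, 0 < μ → M ≤ x → x ≤ m' → G μ x = M + a μ + s μ * (x - M))
    (ha : ∀ μ : ℝ, 0 < μ → |a μ - A * μ| ≤ C * μ ^ 2)
    (hs : ∀ μ : ℝ, 0 < μ → |s μ - 1| ≤ C * μ ^ 2) :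
    ∃ C' > (0 : ℝ), ∃ μ₁ > (0 : ℝ), ∀ μ : ℝ, 0 < μ → μ < μ₁ → ∀ n : ℕ,
      (∀ k : ℕ, k ≤ n → (G μ)^[k] M ≤ m') → m' < (G μ)^[n + 1] M →
      |(n : ℝ) - (m' - M) / (A * μ)| ≤ C' := by
  set L := m' - M with hLdef
  have hL0 : 0 < L := by rw [hLdef]; linarith
  set D := C * (1 + L) with hDdef
  have hD0 : 0 ≤ D := mul_nonneg hC (by linarith)
  refine ⟨2*L*D/A^2 + 2, ?_, A/(2*(D+1)), div_pos hA (by linarith), ?_⟩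
  · have h := div_nonneg (by nlinarith : (0:ℝ) ≤ 2*L*D) (sq_nonneg A)
    linarith
  intro μ hμ hμ1 n hle hgt
  have hAμ : 0 < A * μ := mul_pos hA hμ
  have hμ2 : μ * (2*(D+1)) < A := (lt_div_iff₀ (by linarith)).mp hμ1
  have hDμ : D * μ ≤ A / 2 := by nlinarith
  have hDμ2 : D * μ^2 ≤ A * μ / 2 := by nlinarith
  have hδl0 : 0 < A*μ - D*μ^2 := by nlinarith
  -- step estimate
  have hstep : ∀ x, M ≤ x → x ≤ m' →
      x + (A*μ - D*μ^2) ≤ G μ x ∧ G μ x ≤ x + (A*μ + D*μ^2) := by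
    intro x hx1 hx2
    have h1 := abs_le.mp (ha μ hμ)
    have h2 := abs_le.mp (hs μ hμ)
    rw [haff μ x hμ hx1 hx2]
    have hp1 : (0:ℝ) ≤ (s μ - 1 + C*μ^2) * (x - M) :=
      mul_nonneg (by linarith [h2.1]) (by linarith)
    have hp2 : (0:ℝ) ≤ (1 + C*μ^2 - s μ) * (x - M) :=
      mul_nonneg (by linarith [h2.2]) (by linarith)
    have hp3 : (0:ℝ) ≤ C*μ^2 * (m' - x) :=
      mul_nonneg (by positivity) (by linarith)
    constructor <;> nlinarith [h1.1, h1.2, hp1, hp2, hp3, hDdef, hLdef]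
  -- iterate bounds
  have hiter : ∀ k : ℕ, k ≤ n →
      M + k * (A*μ - D*μ^2) ≤ (G μ)^[k] M ∧ (G μ)^[k] M ≤ M + k * (A*μ + D*μ^2) := by
    intro k
    induction k with
    | zero => intro _; simp
    | succ k ih =>
      intro hk
      have hk' : k ≤ n := Nat.le_of_succ_le hk
      obtain ⟨hl, hr⟩ := ih hk'
      have hkl : (0:ℝ) ≤ (k:ℝ) * (A*μ - D*μ^2) :=
        mul_nonneg (Nat.cast_nonneg k) hδl0.le
      have hxM : M ≤ (G μ)^[k] M := by linarith
      have hxm : (G μ)^[k] M ≤ m' := hle k hk'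
      obtain ⟨h1, h2⟩ := hstep _ hxM hxm
      rw [Function.iterate_succ_apply']
      push_cast
      constructor <;> nlinarith
  obtain ⟨hnl, hnr⟩ := hiter n le_rfl
  have hxM : M ≤ (G μ)^[n] M := by
    have := mul_nonneg (Nat.cast_nonneg n) hδl0.le; linarith
  have hxm : (G μ)^[n] M ≤ m' := hle n le_rfl
  obtain ⟨h1, h2⟩ := hstep _ hxM hxm
  rw [Function.iterate_succ_apply'] at hgt
  have key1 : (n:ℝ) * (A*μ - D*μ^2) ≤ L := by rw [hLdef]; linarith
  have key2 : L < ((n:ℝ)+1) * (A*μ + D*μ^2) := by rw [hLdef]; linarith [hgt, h2, hnr]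
  have hn2 : (n:ℝ) * (A*μ/2) ≤ L := by
    nlinarith [mul_nonneg (Nat.cast_nonneg n) (by linarith : (0:ℝ) ≤ A*μ/2 - D*μ^2)]
  have hnD : (n:ℝ) * (D*μ^2) * A ≤ 2*L*(D*μ) := by
    have h0 : (0:ℝ) ≤ 2*(D*μ) := by nlinarith
    have h := mul_le_mul_of_nonneg_right hn2 h0
    nlinarith [h]
  have h3 : (n:ℝ)*(D*μ^2) ≤ (2*L*D/A^2)*(A*μ) := by
    rw [div_mul_eq_mul_div, le_div_iff₀ (by positivity : (0:ℝ) < A^2)]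
    nlinarith [mul_le_mul_of_nonneg_right hnD hA.le]
  have hc : L/(A*μ)*(A*μ) = L := div_mul_cancel₀ _ hAμ.ne'
  rw [abs_le]
  constructor
  · nlinarith [key2, h3, hDμ2, hc, hAμ]
  · nlinarith [key1, h3, hc, hAμ]
end

section
/- For Herman's/Coelho's PWL circle map G defined by G(x) = a + ((1−a)/b)x for 0 ≤ x < b and G(x) = 1 + (a/(1−b))(x − b) for b ≤ x < 1, with a, b ∈ (0,1), the break points 0 and b lie on the same orbit of the induced circle map (since G(b) = 1 ≡ 0 mod 1), and the rotation number is ρ(G) = ln α_G / (ln α_G − ln β_G) where α_G = (1−a)/b and β_G = a/(1−b), provided α_G > 1 > β_G. In particular if a = b = 1/(1+λ), λ > 1, then α_G = λ, β_G = 1/λ and ρ(G) = 1/2, and the corresponding circle map satisfies G²(x) ≡ x (mod 1) for all x, i.e., it is conjugate to the rigid rotation by 1/2. -/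
open MeasureTheory Filter Set

/-- The lift of the Coelho et al. piecewise linear circle map:
`G(x) = a + ((1-a)/b)x` on `[0,b)` and `G(x) = 1 + (a/(1-b))(x-b)` on `[b,1)`,
extended by `G(x+1) = G(x)+1`. -/
noncomputable def coelhoLift (a b : ℝ) : ℝ → ℝ := fun x =>
  (⌊x⌋ : ℝ) +
    (if Int.fract x < b then a + (1 - a) / b * Int.fract x
     else 1 + a / (1 - b) * (Int.fract x - b))

/-!
Put `s = α / β` and `ρ = log α / log s`, so that `α = s ^ ρ` and `β = s ^ (ρ - 1)`. The lift
`h x = ⌊x⌋ + (s ^ fract x - 1) / (s - 1)` of an increasing bijection of `[0, 1)` then satisfies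
`G ∘ h = h ∘ (· + ρ)`: the cocycle identity `h (x + y) = h y + s ^ y * h x` on `[0, 1)` turns the
two affine branches of `G` into translation by `ρ`, and the parameters match because `a = h ρ`
and `b = h (1 - ρ)`. As `h` stays within distance `1` of the identity, `G` has rotation number `ρ`.
For `a = b = 1 / (1 + λ)` this holds with `s = λ ^ 2` and `ρ = 1 / 2`, so `G ∘ G` is conjugate to
translation by `1`.
-/

open Function Real Topology

theorem Int.fract_mem_Ico (x : ℝ) : Int.fract x ∈ Ico (0 : ℝ) 1 :=
  ⟨Int.fract_nonneg x, Int.fract_lt_one x⟩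

noncomputable def fractLift (φ : ℝ → ℝ) (x : ℝ) : ℝ := ⌊x⌋ + φ (Int.fract x)

theorem fractLift_add_intCast (φ : ℝ → ℝ) (x : ℝ) (n : ℤ) :
    fractLift φ (x + n) = fractLift φ x + n := by
  simp only [fractLift, Int.floor_add_intCast, Int.fract_add_intCast]
  push_cast
  ring

section fractLift

variable {φ ψ : ℝ → ℝ}

theorem fractLift_of_mem_Ico {x : ℝ} (hx : x ∈ Ico (0 : ℝ) 1) : fractLift φ x = φ x := by
  simp [fractLift, Int.floor_eq_zero_iff.2 hx, Int.fract_eq_self.2 hx]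

theorem abs_fractLift_sub_le (hφ : MapsTo φ (Ico 0 1) (Ico 0 1)) (x : ℝ) :
    |fractLift φ x - x| ≤ 1 := by
  have hφx := hφ (Int.fract_mem_Ico x)
  have hx := Int.fract_mem_Ico x
  rw [abs_le, fractLift]
  constructor <;> linarith [Int.floor_add_fract x, hφx.1, hφx.2, hx.1, hx.2]

theorem fractLift_surjective (hφ : SurjOn φ (Ico 0 1) (Ico 0 1)) : Surjective (fractLift φ) := by
  intro y
  obtain ⟨t, ht, hφt⟩ := hφ (Int.fract_mem_Ico y)
  refine ⟨t + ⌊y⌋, ?_⟩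
  rw [fractLift_add_intCast, fractLift_of_mem_Ico ht, hφt, Int.fract_add_floor]

theorem semiconj_fractLift {ρ : ℝ}
    (h : ∀ x ∈ Ico (0 : ℝ) 1, fractLift ψ (fractLift φ x) = fractLift φ (x + ρ)) :
    Semiconj (fractLift φ) (· + ρ) (fractLift ψ) := by
  intro x
  calc fractLift φ (x + ρ) = fractLift φ (Int.fract x + ρ + ⌊x⌋) := by
        rw [add_right_comm, Int.fract_add_floor]
    _ = fractLift ψ (fractLift φ (Int.fract x + ⌊x⌋)) := by
        rw [fractLift_add_intCast, ← h _ (Int.fract_mem_Ico x), ← fractLift_add_intCast,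
          fractLift_add_intCast φ]
    _ = fractLift ψ (fractLift φ x) := by rw [Int.fract_add_floor]

end fractLift

theorem hasRotNum_of_semiconj {F h : ℝ → ℝ} {ρ C : ℝ} (hsurj : Surjective h)
    (hbdd : ∀ x, |h x - x| ≤ C) (hconj : Semiconj h (· + ρ) F) : HasRotNum F ρ := by
  intro x
  obtain ⟨y, rfl⟩ := hsurj x
  set e : ℕ → ℝ := fun m => (h (y + m * ρ) - (y + m * ρ)) - (h y - y)
  have hiter (m : ℕ) : F^[m] (h y) - h y = m * ρ + e m := by
    rw [← hconj.iterate_right m y, add_right_iterate_apply, nsmul_eq_mul]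
    ring
  have he : Tendsto (fun m : ℕ => e m / m) atTop (𝓝 0) := by
    refine squeeze_zero_norm (fun m => ?_) (tendsto_const_div_atTop_nhds_zero_nat (2 * C))
    rw [Real.norm_eq_abs, abs_div, Nat.abs_cast]
    gcongr
    linarith [abs_sub (h (y + m * ρ) - (y + m * ρ)) (h y - y), hbdd (y + m * ρ), hbdd y]
  rw [← add_zero ρ]
  refine (tendsto_const_nhds.add he).congr' ?_
  filter_upwards [eventually_ne_atTop 0] with m hm
  rw [hiter]
  field_simp

noncomputable def expChart (s t : ℝ) : ℝ := (s ^ t - 1) / (s - 1)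

section expChart

variable {s : ℝ}

theorem expChart_zero (s : ℝ) : expChart s 0 = 0 := by simp [expChart]

theorem expChart_one (hs : s ≠ 1) : expChart s 1 = 1 := by
  simp [expChart, div_self (sub_ne_zero.2 hs)]

theorem expChart_add (hs : 0 < s) (x y : ℝ) :
    expChart s (x + y) = expChart s y + s ^ y * expChart s x := by
  simp only [expChart, rpow_add hs]
  ring

theorem one_sub_expChart (hs : 0 < s) (hs1 : s ≠ 1) (t : ℝ) :
    1 - expChart s t = s ^ t * expChart s (1 - t) := by
  have := expChart_add hs (1 - t) t
  rw [sub_add_cancel, expChart_one hs1] at this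
  linarith

theorem expChart_strictMono (hs : 1 < s) : StrictMono (expChart s) := fun t r htr => by
  unfold expChart
  have : s ^ t < s ^ r := rpow_lt_rpow_of_exponent_lt hs htr
  gcongr

theorem continuous_expChart (hs : 0 < s) : Continuous (expChart s) :=
  ((continuous_const.rpow continuous_id fun _ => .inl hs.ne').sub continuous_const).div_const _

theorem mapsTo_expChart (hs : 1 < s) : MapsTo (expChart s) (Ico 0 1) (Ico 0 1) := fun _ ht =>
  ⟨expChart_zero s ▸ (expChart_strictMono hs).monotone ht.1,
    expChart_one hs.ne' ▸ expChart_strictMono hs ht.2⟩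

theorem surjOn_expChart (hs : 1 < s) : SurjOn (expChart s) (Ico 0 1) (Ico 0 1) := by
  have := intermediate_value_Ico zero_le_one (continuous_expChart (by linarith)).continuousOn
  rwa [expChart_zero, expChart_one hs.ne'] at this

theorem hasRotNum_of_semiconj_fractLift_expChart {F : ℝ → ℝ} {ρ : ℝ} (hs : 1 < s)
    (hconj : Semiconj (fractLift (expChart s)) (· + ρ) F) : HasRotNum F ρ :=
  hasRotNum_of_semiconj (fractLift_surjective (surjOn_expChart hs))
    (abs_fractLift_sub_le (mapsTo_expChart hs)) hconj

end expChart

theorem coelhoLift_eq_fractLift (a b : ℝ) :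
    coelhoLift a b =
      fractLift fun t => if t < b then a + (1 - a) / b * t else 1 + a / (1 - b) * (t - b) :=
  rfl

theorem coelhoLift_self {a b : ℝ} (hb : b ∈ Ioo (0 : ℝ) 1) : coelhoLift a b b = 1 := by
  rw [coelhoLift_eq_fractLift, fractLift_of_mem_Ico (Ioo_subset_Ico_self hb), if_neg (lt_irrefl b)]
  ring

theorem coelhoLift_expChart {s ρ x : ℝ} (hs : 1 < s) (hρ : ρ ∈ Ioo (0 : ℝ) 1)
    (hx : x ∈ Ico (0 : ℝ) 1) :
    coelhoLift (expChart s ρ) (expChart s (1 - ρ)) (expChart s x) =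
      fractLift (expChart s) (x + ρ) := by
  have hs0 : 0 < s := by linarith
  have hmono := expChart_strictMono hs
  have hρpos : 0 < expChart s ρ := expChart_zero s ▸ hmono hρ.1
  have hbpos : 0 < expChart s (1 - ρ) := expChart_zero s ▸ hmono (by linarith [hρ.2])
  rw [coelhoLift_eq_fractLift, fractLift_of_mem_Ico (mapsTo_expChart hs hx)]
  rcases lt_or_ge x (1 - ρ) with hlt | hge
  · have hslope : (1 - expChart s ρ) / expChart s (1 - ρ) = s ^ ρ := by
      rw [one_sub_expChart hs0 hs.ne', mul_div_assoc, div_self hbpos.ne', mul_one]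
    rw [if_pos (hmono hlt), hslope, fractLift_of_mem_Ico ⟨by linarith [hx.1, hρ.1], by linarith⟩,
      expChart_add hs0]
  · have hslope : expChart s ρ / (1 - expChart s (1 - ρ)) = (s ^ (1 - ρ))⁻¹ := by
      rw [one_sub_expChart hs0 hs.ne', sub_sub_cancel, div_mul_cancel_right₀ hρpos.ne']
    have hsplit : expChart s x = expChart s (1 - ρ) + s ^ (1 - ρ) * expChart s (x + ρ - 1) := by
      rw [← expChart_add hs0]
      ring_nf
    have hwrap : fractLift (expChart s) (x + ρ) = expChart s (x + ρ - 1) + 1 := by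
      have := fractLift_add_intCast (expChart s) (x + ρ - 1) 1
      rw [Int.cast_one, sub_add_cancel] at this
      rw [this, fractLift_of_mem_Ico ⟨by linarith, by linarith [hx.2, hρ.2]⟩]
    rw [if_neg (hmono.le_iff_le.2 hge).not_gt, hslope, hwrap, hsplit, add_sub_cancel_left,
      inv_mul_cancel_left₀ (rpow_pos_of_pos hs0 _).ne', add_comm]

theorem semiconj_coelhoLift_expChart {s ρ : ℝ} (hs : 1 < s) (hρ : ρ ∈ Ioo (0 : ℝ) 1) :
    Semiconj (fractLift (expChart s)) (· + ρ) (coelhoLift (expChart s ρ) (expChart s (1 - ρ))) := by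
  rw [coelhoLift_eq_fractLift]
  refine semiconj_fractLift fun x hx => ?_
  rw [← coelhoLift_eq_fractLift, fractLift_of_mem_Ico hx]
  exact coelhoLift_expChart hs hρ hx

theorem rpow_log_div_log_sub_log {α β : ℝ} (hα : 0 < α) (hβ : 0 < β) (hne : log α ≠ log β) :
    (α / β) ^ (log α / (log α - log β)) = α := by
  rw [rpow_def_of_pos (div_pos hα hβ), log_div hα.ne' hβ.ne',
    mul_div_cancel₀ _ (sub_ne_zero.2 hne), exp_log hα]

theorem hasRotNum_coelhoLift {a b : ℝ} (ha : a ∈ Ioo (0 : ℝ) 1) (hb : b ∈ Ioo (0 : ℝ) 1)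
    (hα : 1 < (1 - a) / b) (hβ : a / (1 - b) < 1) :
    HasRotNum (coelhoLift a b)
      (log ((1 - a) / b) / (log ((1 - a) / b) - log (a / (1 - b)))) := by
  obtain ⟨ha0, ha1⟩ := ha
  obtain ⟨hb0, hb1⟩ := hb
  have hb1' : 1 - b ≠ 0 := by linarith
  set α := (1 - a) / b with hαdef
  set β := a / (1 - b) with hβdef
  have hβ0 : 0 < β := div_pos ha0 (by linarith)
  have hlogα : 0 < log α := log_pos hα
  have hlogβ : log β < 0 := log_neg hβ0 hβ
  set ρ := log α / (log α - log β)
  have hρ : ρ ∈ Ioo (0 : ℝ) 1 :=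
    ⟨div_pos hlogα (by linarith), (div_lt_one (by linarith)).2 (by linarith)⟩
  have hs : 1 < α / β := (one_lt_div hβ0).2 (by linarith)
  have hsρ : (α / β) ^ ρ = α := rpow_log_div_log_sub_log (by linarith) hβ0 (by linarith)
  have hsρ' : (α / β) ^ (1 - ρ) = β⁻¹ := by
    rw [rpow_sub (by linarith), rpow_one, hsρ]
    field_simp
  have hsne : α / β - 1 ≠ 0 := by linarith
  have ha' : expChart (α / β) ρ = a := by
    rw [expChart, hsρ, div_eq_iff hsne, hαdef, hβdef]
    field_simp
    ring
  have hb' : expChart (α / β) (1 - ρ) = b := by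
    rw [expChart, hsρ', div_eq_iff hsne, hαdef, hβdef]
    field_simp
    ring
  have := hasRotNum_of_semiconj_fractLift_expChart hs (semiconj_coelhoLift_expChart hs hρ)
  rwa [ha', hb'] at this

theorem comp_self_eq_add_one_of_semiconj_half {F φ : ℝ → ℝ} (hφ : Surjective (fractLift φ))
    (hconj : Semiconj (fractLift φ) (· + 1 / 2) F) (x : ℝ) : F (F x) = x + 1 := by
  obtain ⟨y, rfl⟩ := hφ x
  rw [← hconj y, ← hconj]
  simp only [add_assoc, add_halves]
  exact_mod_cast fractLift_add_intCast φ y 1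

theorem one_div_one_add_eq_expChart {lam : ℝ} (hlam : 1 < lam) :
    1 / (1 + lam) = expChart (lam ^ 2) (1 / 2) := by
  have : lam ^ 2 - 1 ≠ 0 := by nlinarith
  rw [expChart, ← sqrt_eq_rpow, sqrt_sq (by linarith), eq_div_iff this]
  field_simp
  ring

/-- for the Coelho map, the break points `0` and `b` lie on the same
orbit (`G(b) = 1 ≡ 0`), the rotation number is `ln α/(ln α - ln β)` when
`α = (1-a)/b > 1 > β = a/(1-b)`, and in the special case `a = b = 1/(1+λ)`, `λ > 1`,
one has `α = λ`, `β = 1/λ`, `ρ(G) = 1/2` and `G²(x) = x + 1` for all `x`. -/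
theorem stmt17 (a b : ℝ) (ha : a ∈ Set.Ioo (0 : ℝ) 1) (hb : b ∈ Set.Ioo (0 : ℝ) 1) :
    coelhoLift a b b = 1 ∧
    (1 < (1 - a) / b → a / (1 - b) < 1 →
      HasRotNum (coelhoLift a b)
        (Real.log ((1 - a) / b) /
          (Real.log ((1 - a) / b) - Real.log (a / (1 - b))))) ∧
    (∀ lam : ℝ, 1 < lam → a = 1 / (1 + lam) → b = 1 / (1 + lam) →
      (1 - a) / b = lam ∧ a / (1 - b) = 1 / lam ∧
      (∀ x, coelhoLift a b (coelhoLift a b x) = x + 1) ∧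
      HasRotNum (coelhoLift a b) (1 / 2)) := by
  refine ⟨coelhoLift_self hb, hasRotNum_coelhoLift ha hb, ?_⟩
  rintro lam hlam rfl rfl
  have hlam1 : 1 + lam ≠ 0 := by positivity
  refine ⟨?_, ?_, ?_⟩
  · rw [one_sub_div hlam1, add_sub_cancel_left, div_div_div_cancel_right₀ hlam1, div_one]
  · rw [one_sub_div hlam1, add_sub_cancel_left, div_div_div_cancel_right₀ hlam1]
  have hs : 1 < lam ^ 2 := one_lt_pow₀ hlam two_ne_zero
  have hconj := semiconj_coelhoLift_expChart hs (ρ := 1 / 2) (by norm_num)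
  rw [show (1 : ℝ) - 1 / 2 = 1 / 2 by norm_num, ← one_div_one_add_eq_expChart hlam] at hconj
  exact ⟨comp_self_eq_add_one_of_semiconj_half (fractLift_surjective (surjOn_expChart hs)) hconj,
    hasRotNum_of_semiconj_fractLift_expChart hs hconj⟩
end
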